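/- arXiv:1410.8362 — 10 statements merged into one kernel-verified Lean document; each statement's English description precedes it below -/
import Mathlib

section
/- There is no strictly increasing transfinite sequence of length ω₁ of nonnegative upper semicontinuous functions on a Polish space X (with respect to the pointwise order). In fact, there exists a strictly order-preserving map from (USC⁺(X), <_p) into ([0,1], <). -/
open Ordinal Set

noncomputable section

/-- Parity of an ordinal: `a = γ + n` with `γ` limit, `n < ω`; even iff `n` is even. -/
def OrdEven (a : Ordinal) : Prop := a % 2 = 0

/-- Upper semicontinuity. -/
def USC {X : Type} [TopologicalSpace X] (f : X → ℝ) : Prop :=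
  ∀ r : ℝ, IsOpen (f ⁻¹' Set.Iio r)

/-- The least ordinal where two transfinite sequences differ. -/
def dOrd (f g : Ordinal → ℝ) : Ordinal := sInf {a | f a ≠ g a}

/-- The alternating lexicographical order on transfinite sequences of reals. -/
def AltLex (f g : Ordinal → ℝ) : Prop :=
  f ≠ g ∧ ((OrdEven (dOrd f g) ∧ f (dOrd f g) < g (dOrd f g)) ∨
    (¬ OrdEven (dOrd f g) ∧ g (dOrd f g) < f (dOrd f g)))

/-- `f` encodes a strictly decreasing countable transfinite sequence in `[0,1]`
with last element `0` at index `ξ` (padded with `0` beyond `ξ`). -/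
def IsDSeqLen (f : Ordinal → ℝ) (ξ : Ordinal) : Prop :=
  ξ < (Cardinal.aleph 1).ord ∧ (∀ a, f a ∈ Set.Icc (0:ℝ) 1) ∧
  (∀ a b, a < b → b ≤ ξ → f b < f a) ∧ (∀ a, ξ ≤ a → f a = 0)

/-- Membership in `[0,1]^{<ω₁}_{↘0}`. -/
def IsDSeq (f : Ordinal → ℝ) : Prop := ∃ ξ, IsDSeqLen f ξ

/-!
Code a function `f` by the set of pairs `(U, q)`, with `U` a basic open set and `q` rational, such
that `f ≥ q` somewhere on `U`. If `f` is upper semicontinuous and `f < g`, pick `x` and `q` with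
`f x < q < g x` and a basic `U ∋ x` inside the open set `{f < q}`: then `(U, q)` codes `g` but not
`f`. Summing positive weights of total mass at most `1` over the code therefore gives a strictly
monotone map into `[0, 1]`. Composing it with a strictly increasing `ω₁`-sequence would give a
strictly increasing `ω₁`-sequence of reals, and rationals between consecutive terms would inject
`ω₁` into `ℚ`.
-/

open TopologicalSpace

theorem exists_strictMono_set_Icc (ι : Type*) [Countable ι] :
    ∃ Ψ : Set ι → ℝ, StrictMono Ψ ∧ ∀ s, Ψ s ∈ Icc (0 : ℝ) 1 := by
  have := Encodable.ofCountable ι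
  obtain ⟨w, hw_pos, c, hw_sum, hc⟩ := posSumOfEncodable zero_lt_one ι
  have hw : Summable w := hw_sum.summable
  refine ⟨fun s => ∑' i, s.indicator w i, fun s t hst => ?_, fun s => ⟨?_, ?_⟩⟩
  · obtain ⟨i, hit, his⟩ := Set.exists_of_ssubset hst
    refine (hw.indicator s).tsum_lt_tsum (i := i)
      (Set.indicator_le_indicator_of_subset hst.subset fun j => (hw_pos j).le) ?_ (hw.indicator t)
    simpa [Set.indicator_of_mem hit, Set.indicator_of_notMem his] using hw_pos i
  · exact tsum_nonneg fun i => Set.indicator_nonneg (fun j _ => (hw_pos j).le) i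
  · calc ∑' i, s.indicator w i ≤ ∑' i, w i :=
          (hw.indicator s).tsum_le_tsum (Set.indicator_le_self' fun j _ => (hw_pos j).le) hw
      _ = c := hw_sum.tsum_eq
      _ ≤ 1 := hc

section superlevelCode

variable {X : Type} [TopologicalSpace X] [SecondCountableTopology X]

def superlevelCode (f : X → ℝ) : Set (countableBasis X × ℚ) :=
  {p | ∃ y ∈ (p.1 : Set X), (p.2 : ℝ) ≤ f y}

theorem superlevelCode_mono : Monotone (superlevelCode (X := X)) :=
  fun _ _ hfg _ ⟨y, hyU, hqy⟩ => ⟨y, hyU, hqy.trans (hfg y)⟩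

theorem superlevelCode_ssubset {f g : X → ℝ} (hf : USC f) (hfg : f < g) :
    superlevelCode f ⊂ superlevelCode g := by
  obtain ⟨x, hx⟩ := Pi.lt_def.1 hfg |>.2
  obtain ⟨q, hfq, hqg⟩ := exists_rat_btwn hx
  obtain ⟨U, hU, hxU, hUf⟩ :=
    (isBasis_countableBasis X).exists_subset_of_mem_open hfq (hf q)
  refine (superlevelCode_mono hfg.le).ssubset_of_not_superset fun hsub => ?_
  obtain ⟨y, hyU, hqy⟩ := hsub (a := (⟨U, hU⟩, q)) ⟨x, hxU, hqg.le⟩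
  exact (hUf hyU).not_ge hqy

end superlevelCode

theorem exists_Icc_valued_strictMono_usc (X : Type) [TopologicalSpace X]
    [SecondCountableTopology X] :
    ∃ Φ : (X → ℝ) → ℝ, (∀ f, Φ f ∈ Icc (0 : ℝ) 1) ∧ ∀ f g, USC f → f < g → Φ f < Φ g := by
  obtain ⟨Ψ, hΨ, hΨ01⟩ := exists_strictMono_set_Icc (countableBasis X × ℚ)
  exact ⟨Ψ ∘ superlevelCode, fun f => hΨ01 _,
    fun f g hf hfg => hΨ (superlevelCode_ssubset hf hfg)⟩

theorem countable_of_strictMono_real {α : Type*} [LinearOrder α] [SuccOrder α] [NoMaxOrder α]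
    {φ : α → ℝ} (hφ : StrictMono φ) : Countable α := by
  choose q hq using fun a => exists_rat_btwn (hφ (Order.lt_succ a))
  refine (StrictMono.injective fun a b hab => ?_ : Function.Injective q).countable
  exact_mod_cast (hq a).2.trans_le ((hφ.monotone (Order.succ_le_of_lt hab)).trans (hq b).1.le)

theorem not_strictMonoOn_Iio_omega_one (φ : Ordinal → ℝ) :
    ¬ StrictMonoOn φ (Iio (Cardinal.aleph 1).ord) := by
  intro hφ
  have := Cardinal.noMaxOrder (Cardinal.aleph0_le_aleph 1)
  have hcount := countable_of_strictMono_real (φ := fun x => φ (ToType.toOrd x))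
    fun x y hxy => hφ (ToType.toOrd x).2 (ToType.toOrd y).2 (ToType.mk.symm.strictMono hxy)
  have := Cardinal.mk_le_aleph0_iff.2 hcount
  rw [Cardinal.mk_toType, Cardinal.card_ord] at this
  exact this.not_gt Cardinal.aleph0_lt_aleph_one

theorem stmt_0 (X : Type) [TopologicalSpace X] [PolishSpace X] :
    (¬ ∃ F : Ordinal → X → ℝ,
        (∀ a, a < (Cardinal.aleph 1).ord → USC (F a) ∧ ∀ x, 0 ≤ F a x) ∧
        (∀ a b, a < b → b < (Cardinal.aleph 1).ord →
          (∀ x, F a x ≤ F b x) ∧ F a ≠ F b)) ∧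
    ∃ Φ : (X → ℝ) → ℝ,
      (∀ f, USC f → (∀ x, 0 ≤ f x) → Φ f ∈ Set.Icc (0:ℝ) 1) ∧
      (∀ f g, USC f → USC g → (∀ x, 0 ≤ f x) → (∀ x, 0 ≤ g x) →
        (∀ x, f x ≤ g x) → f ≠ g → Φ f < Φ g) := by
  obtain ⟨Φ, hΦ01, hΦ⟩ := exists_Icc_valued_strictMono_usc X
  refine ⟨?_, Φ, fun f _ _ => hΦ01 f,
    fun f g hf _ _ _ hle hne => hΦ f g hf (lt_of_le_of_ne hle hne)⟩
  rintro ⟨F, hF_usc, hF_lt⟩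
  refine not_strictMonoOn_Iio_omega_one (Φ ∘ F) fun a ha b hb hab => ?_
  obtain ⟨hle, hne⟩ := hF_lt a b hab hb
  exact hΦ _ _ (hF_usc a ha).1 (lt_of_le_of_ne hle hne)
end
end

section
/- The linearly ordered set ([0,1]^{<ω₁}_{↘0}, <_altlex) contains no subset of order type ω₁, i.e., there is no strictly increasing ω₁-sequence in this order. -/
open Ordinal Set

noncomputable section

/-!
Along an `AltLex`-increasing `ω₁`-sequence `(F c)` every coordinate stabilises, by induction on
`γ < ω₁`: once the (countably many) coordinates below `γ` have stabilised, which happens below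
`ω₁` by regularity, the `AltLex` order makes `c ↦ ± F c γ` monotone, the sign being the parity
of `γ`; and a monotone `ω₁`-sequence of reals is eventually constant, since each of the countably
many rational cuts `f c < q` is eventually decided. The limit sequence `γ ↦ lim_c F c γ` never
vanishes, for otherwise two terms of the chain would coincide; since each `F c` is strictly
decreasing up to its zero, the limit is then a strictly decreasing `ω₁`-sequence of reals, which
the same cut argument rules out.
-/

universe u v

theorem Ordinal.countable_Iio_of_lt_omega_one {γ : Ordinal.{u}} (hγ : γ < ω₁) :
    Countable (Iio γ) := by
  rw [← Cardinal.mk_le_aleph0_iff, Cardinal.mk_Iio_ordinal, Cardinal.lift_le_aleph0,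
    ← Order.lt_succ_iff, Cardinal.succ_aleph0, ← Cardinal.lt_omega_iff_card_lt]
  exact hγ

theorem Ordinal.exists_bound_lt_omega_one {ι : Type*} [Countable ι] {f : ι → Ordinal.{u}}
    (hf : ∀ i, f i < ω₁) : ∃ b < ω₁, ∀ i, f i ≤ b :=
  ⟨⨆ i, f i, iSup_lt_omega_one hf, Ordinal.le_iSup f⟩

theorem Ordinal.exists_eq_of_monotoneOn_omega_one {f : Ordinal.{u} → ℝ} {C : Ordinal.{u}}
    (hC : C < ω₁) (hf : MonotoneOn f (Ico C ω₁)) :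
    ∃ b, C ≤ b ∧ b < ω₁ ∧ ∀ c, b ≤ c → c < ω₁ → f c = f b := by
  have hcut : ∀ q : ℚ, ∃ b, C ≤ b ∧ b < ω₁ ∧
      ∀ c, b ≤ c → c < ω₁ → (f c < q ↔ f b < q) := by
    intro q
    by_cases hq : ∃ c ∈ Ico C ω₁, (q : ℝ) ≤ f c
    · obtain ⟨b, ⟨hCb, hbω⟩, hqb⟩ := hq
      refine ⟨b, hCb, hbω, fun c hbc hcω => ?_⟩
      have hqc : (q : ℝ) ≤ f c := hqb.trans (hf ⟨hCb, hbω⟩ ⟨hCb.trans hbc, hcω⟩ hbc)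
      simp only [not_lt.mpr hqc, not_lt.mpr hqb]
    · push Not at hq
      exact ⟨C, le_rfl, hC, fun c hCc hcω => iff_of_true (hq c ⟨hCc, hcω⟩) (hq C ⟨le_rfl, hC⟩)⟩
  choose b hCb hbω hb using hcut
  obtain ⟨B, hBω, hbB⟩ := exists_bound_lt_omega_one hbω
  refine ⟨B, (hCb 0).trans (hbB 0), hBω, fun c hBc hcω => ?_⟩
  have hsame : ∀ q : ℚ, f c < q ↔ f B < q := fun q =>
    (hb q c ((hbB q).trans hBc) hcω).trans (hb q B (hbB q) hBω).symm
  by_contra hne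
  rcases lt_or_gt_of_ne hne with hlt | hlt <;> obtain ⟨q, hq₁, hq₂⟩ := exists_rat_btwn hlt
  · exact lt_asymm hq₂ ((hsame q).mp hq₁)
  · exact lt_asymm hq₂ ((hsame q).mpr hq₁)

theorem Ordinal.not_strictAntiOn_omega_one (f : Ordinal.{u} → ℝ) : ¬ StrictAntiOn f (Iio ω₁) := by
  intro hf
  have hmono : MonotoneOn (fun c => -f c) (Ico 0 ω₁) := fun c hc c' hc' hle =>
    neg_le_neg (hf.antitoneOn hc.2 hc'.2 hle)
  obtain ⟨b, -, hbω, hb⟩ := exists_eq_of_monotoneOn_omega_one (omega_pos 1) hmono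
  have hb₁ : b + 1 < ω₁ := (Cardinal.isSuccLimit_omega 1).add_one_lt hbω
  exact (hf hbω hb₁ (lt_add_one b)).ne (neg_inj.mp (hb _ (lt_add_one b).le hb₁))

theorem dOrd_eq_of_eqOn_Iio {f g : Ordinal → ℝ} {γ : Ordinal} (hagree : ∀ β < γ, f β = g β)
    (hne : f γ ≠ g γ) : dOrd f g = γ :=
  le_antisymm (csInf_le' hne) (le_csInf ⟨γ, hne⟩ fun _ hβ => not_lt.mp fun h => hβ (hagree _ h))

open Classical in
def signedCoord (γ : Ordinal) (f : Ordinal → ℝ) : ℝ := if OrdEven γ then f γ else -f γ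

theorem eq_of_signedCoord_eq {γ : Ordinal} {f g : Ordinal → ℝ}
    (h : signedCoord γ f = signedCoord γ g) : f γ = g γ := by
  unfold signedCoord at h
  split_ifs at h
  · exact h
  · exact neg_inj.mp h

theorem AltLex.signedCoord_le {f g : Ordinal → ℝ} {γ : Ordinal} (h : AltLex f g)
    (hagree : ∀ β < γ, f β = g β) : signedCoord γ f ≤ signedCoord γ g := by
  by_cases hne : f γ = g γ
  · rw [signedCoord, signedCoord, hne]
  have hd := dOrd_eq_of_eqOn_Iio hagree hne
  rcases h.2 with ⟨he, hlt⟩ | ⟨ho, hlt⟩ <;> rw [hd] at hlt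
  · simp only [signedCoord, if_pos (hd ▸ he)]
    exact hlt.le
  · simp only [signedCoord, if_neg (hd ▸ ho)]
    exact neg_le_neg hlt.le

theorem IsDSeq.eq_zero_of_le {f : Ordinal → ℝ} (hf : IsDSeq f) {γ₀ γ : Ordinal} (h₀ : f γ₀ = 0)
    (hγ : γ₀ ≤ γ) : f γ = 0 := by
  obtain ⟨ξ, -, hIcc, hdec, hzero⟩ := hf
  refine hzero γ (le_trans (not_lt.mp fun hlt => ?_) hγ)
  exact (hIcc ξ).1.not_gt (h₀ ▸ hdec γ₀ ξ hlt le_rfl)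

theorem IsDSeq.apply_lt_of_lt {f : Ordinal → ℝ} (hf : IsDSeq f) {β γ : Ordinal} (hβγ : β < γ)
    (hγ : f γ ≠ 0) : f γ < f β := by
  obtain ⟨ξ, -, -, hdec, hzero⟩ := hf
  exact hdec β γ hβγ (not_lt.mp fun hlt => hγ (hzero γ hlt.le))

theorem exists_eventually_eqOn_Iic {F : Ordinal.{u} → Ordinal.{v} → ℝ} (hinc : ∀ a b, a < b → b < ω₁ → AltLex (F a) (F b))
    {γ : Ordinal.{v}} (hγ : γ < ω₁) :
    ∃ b < ω₁, ∀ c, b ≤ c → c < ω₁ → EqOn (F c) (F b) (Iic γ) := by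
  induction γ using WellFoundedLT.induction with | _ γ ih =>
  choose! b hbω hb using fun β (hβ : β < γ) => ih β hβ (hβ.trans hγ)
  have := countable_Iio_of_lt_omega_one hγ
  obtain ⟨C, hCω, hbC⟩ := exists_bound_lt_omega_one (ι := Iio γ) (f := fun β => b β)
    (fun β => hbω β β.2)
  have hbelow : ∀ c, C ≤ c → c < ω₁ → ∀ β < γ, F c β = F C β := fun c hc hcω β hβ =>
    (hb β hβ c ((hbC ⟨β, hβ⟩).trans hc) hcω self_mem_Iic).trans
      (hb β hβ C (hbC ⟨β, hβ⟩) hCω self_mem_Iic).symm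
  have hmono : MonotoneOn (fun c => signedCoord γ (F c)) (Ico C ω₁) := by
    intro c hc c' hc' hle
    rcases hle.lt_or_eq with hlt | rfl
    · exact (hinc c c' hlt hc'.2).signedCoord_le fun β hβ =>
        (hbelow c hc.1 hc.2 β hβ).trans (hbelow c' hc'.1 hc'.2 β hβ).symm
    · exact le_rfl
  obtain ⟨b', hCb', hb'ω, hb'⟩ := exists_eq_of_monotoneOn_omega_one hCω hmono
  refine ⟨b', hb'ω, fun c hc hcω β (hβ : β ≤ γ) => ?_⟩
  rcases hβ.lt_or_eq with hβ | rfl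
  · exact (hbelow c (hCb'.trans hc) hcω β hβ).trans (hbelow b' hCb' hb'ω β hβ).symm
  · exact eq_of_signedCoord_eq (hb' c hc hcω)

theorem apply_ne_zero_of_eventually_eqOn_Iic {F : Ordinal.{u} → Ordinal.{v} → ℝ}
    (hinc : ∀ a b, a < b → b < ω₁ → AltLex (F a) (F b)) (hseq : ∀ a, a < ω₁ → IsDSeq (F a)) {b : Ordinal.{u}} {γ : Ordinal.{v}} (hbω : b < ω₁)
    (hb : ∀ c, b ≤ c → c < ω₁ → EqOn (F c) (F b) (Iic γ)) : F b γ ≠ 0 := by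
  intro h₀
  have hb₁ : b + 1 < ω₁ := (Cardinal.isSuccLimit_omega 1).add_one_lt hbω
  have h₀' : F (b + 1) γ = 0 := (hb _ (lt_add_one b).le hb₁ self_mem_Iic).trans h₀
  refine (hinc b (b + 1) (lt_add_one b) hb₁).1 (funext fun β => ?_)
  rcases lt_or_ge β γ with hβ | hβ
  · exact (hb _ (lt_add_one b).le hb₁ hβ.le).symm
  · rw [(hseq b hbω).eq_zero_of_le h₀ hβ, (hseq _ hb₁).eq_zero_of_le h₀' hβ]

theorem stmt_3 :
    ¬ ∃ F : Ordinal → Ordinal → ℝ,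
      (∀ a, a < (Cardinal.aleph 1).ord → IsDSeq (F a)) ∧
      (∀ a b, a < b → b < (Cardinal.aleph 1).ord → AltLex (F a) (F b)) := by
  rintro ⟨F, hseq, hinc⟩
  rw [Cardinal.ord_aleph] at hseq hinc
  choose! b hbω hb using fun γ (hγ : γ < ω₁) => exists_eventually_eqOn_Iic hinc hγ
  refine not_strictAntiOn_omega_one (fun γ => F (b γ) γ) fun γ hγ γ' hγ' hlt => ?_
  set c := max (b γ) (b γ')
  have hcω : c < ω₁ := max_lt (hbω γ hγ) (hbω γ' hγ')
  have hcγ : F c γ = F (b γ) γ := hb γ hγ c (le_max_left _ _) hcω self_mem_Iic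
  have hcγ' : F c γ' = F (b γ') γ' := hb γ' hγ' c (le_max_right _ _) hcω self_mem_Iic
  have hne : F c γ' ≠ 0 :=
    hcγ' ▸ apply_ne_zero_of_eventually_eqOn_Iic hinc hseq (hbω γ' hγ') (hb γ' hγ')
  simpa only [hcγ, hcγ'] using (hseq c hcω).apply_lt_of_lt hlt hne
end
end

section
/- Let g : X → ℝ be a nonnegative bounded Baire class 1 function on a Polish space X such that the upper regularization of g equals the upper regularization of ĝ − g (where ĝ denotes the upper regularization of g). Then g is identically zero. -/
open Ordinal Set

noncomputable section

/-- The upper regularization of a bounded function. -/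
def upperReg {X : Type} [TopologicalSpace X] (f : X → ℝ) : X → ℝ :=
  fun x => sInf {y : ℝ | ∃ g : X → ℝ, USC g ∧ (∀ z, f z ≤ g z) ∧ g x = y}

/-- Baire class 1: a pointwise limit of continuous functions. -/
def BaireClass1 {X : Type} [TopologicalSpace X] (f : X → ℝ) : Prop :=
  ∃ F : ℕ → X → ℝ, (∀ n, Continuous (F n)) ∧
    ∀ x, Filter.Tendsto (fun n => F n x) Filter.atTop (nhds (f x))

/-!
Let `s = sup ĝ > 0` and `t = 3s/4`. Near any point where `ĝ > t`, the hypothesis `ĝ = (ĝ - g)^`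
produces points `y` with `ĝ y - g y > t`, hence `g y < s - t = s/4`, while `ĝ > t` itself
produces points `z` with `g z > t = 3s/4`; both kinds lie in `{ĝ > t}`. So `g` oscillates by at
least `s/2` on every relatively open piece of `{ĝ > t}`, which is impossible for a Baire class 1
function on a Polish space.
-/

section UpperRegularization

variable {X : Type} [TopologicalSpace X]

theorem usc_iff_upperSemicontinuous {f : X → ℝ} : USC f ↔ UpperSemicontinuous f :=
  upperSemicontinuous_iff_isOpen_preimage.symm

theorem le_upperReg {f : X → ℝ} {M : ℝ} (hM : ∀ z, f z ≤ M) (x : X) : f x ≤ upperReg f x := by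
  refine le_csInf ⟨M, fun _ => M, usc_iff_upperSemicontinuous.2 upperSemicontinuous_const, hM,
    rfl⟩ ?_
  rintro _ ⟨G, -, hfG, rfl⟩
  exact hfG x

theorem upperReg_le {f G : X → ℝ} (hG : USC G) (hfG : ∀ z, f z ≤ G z) (x : X) :
    upperReg f x ≤ G x := by
  refine csInf_le ⟨f x, ?_⟩ ⟨G, hG, hfG, rfl⟩
  rintro _ ⟨G', -, hfG', rfl⟩
  exact hfG' x

theorem upperReg_le_const {f : X → ℝ} {M : ℝ} (hM : ∀ z, f z ≤ M) (x : X) : upperReg f x ≤ M :=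
  upperReg_le (usc_iff_upperSemicontinuous.2 upperSemicontinuous_const) hM x

theorem exists_gt_of_lt_upperReg {f : X → ℝ} {M : ℝ} (hM : ∀ z, f z ≤ M) {x : X} {t : ℝ}
    (ht : t < upperReg f x) {U : Set X} (hU : IsOpen U) (hxU : x ∈ U) : ∃ z ∈ U, t < f z := by
  by_contra! hfU
  set G : X → ℝ := fun z => t + Uᶜ.indicator (fun _ => max (M - t) 0) z
  have hG : USC G := usc_iff_upperSemicontinuous.2 <| upperSemicontinuous_const.add <|
    hU.isClosed_compl.upperSemicontinuous_indicator (le_max_right _ _)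
  have hfG : ∀ z, f z ≤ G z := by
    intro z
    by_cases hz : z ∈ U
    · simpa [G, hz] using hfU z hz
    · simp only [G, indicator_of_mem (show z ∈ Uᶜ from hz)]
      linarith [hM z, le_max_left (M - t) 0]
  have : upperReg f x ≤ t := by simpa [G, hxU] using upperReg_le hG hfG x
  linarith

end UpperRegularization

section BaireClass1

variable {X : Type} [TopologicalSpace X]

theorem BaireClass1.comp_continuous {Y : Type} [TopologicalSpace Y] {g : Y → ℝ}
    (hg : BaireClass1 g) {φ : X → Y} (hφ : Continuous φ) : BaireClass1 (g ∘ φ) := by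
  obtain ⟨F, hFc, hFg⟩ := hg
  exact ⟨fun n => F n ∘ φ, fun n => (hFc n).comp hφ, fun x => hFg (φ x)⟩

theorem BaireClass1.exists_isOpen_nonempty_abs_sub_le [BaireSpace X] [Nonempty X] {g : X → ℝ}
    (hg : BaireClass1 g) {ε : ℝ} (hε : 0 < ε) :
    ∃ W : Set X, IsOpen W ∧ W.Nonempty ∧ ∀ y ∈ W, ∀ z ∈ W, |g y - g z| ≤ ε := by
  obtain ⟨F, hFc, hFg⟩ := hg
  set δ := ε / 4
  have hδ : 0 < δ := by positivity
  set A : ℕ → Set X := fun N => ⋂ m ≥ N, {x | dist (F m x) (F N x) ≤ δ}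
  have hA : ∀ N, IsClosed (A N) := fun N =>
    isClosed_biInter fun m _ => isClosed_le ((hFc m).dist (hFc N)) continuous_const
  have hA_cover : ⋃ N, A N = Set.univ := by
    refine eq_univ_of_forall fun x => mem_iUnion.2 ?_
    obtain ⟨N, hN⟩ := Metric.cauchySeq_iff'.1 (hFg x).cauchySeq δ hδ
    exact ⟨N, mem_iInter₂.2 fun m hm => (hN m hm).le⟩
  have hgF : ∀ N, ∀ x ∈ A N, dist (g x) (F N x) ≤ δ := fun N x hx =>
    le_of_tendsto ((hFg x).dist tendsto_const_nhds)
      (Filter.eventually_atTop.2 ⟨N, fun m hm => mem_iInter₂.1 hx m hm⟩)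
  obtain ⟨N, x, hx⟩ := nonempty_interior_of_iUnion_of_closed hA hA_cover
  refine ⟨interior (A N) ∩ F N ⁻¹' Metric.ball (F N x) δ,
    isOpen_interior.inter (Metric.isOpen_ball.preimage (hFc N)), ⟨x, hx, Metric.mem_ball_self hδ⟩,
    fun y ⟨hyA, hyx⟩ z ⟨hzA, hzx⟩ => ?_⟩
  rw [← Real.dist_eq]
  calc dist (g y) (g z)
      ≤ dist (g y) (F N y) + dist (F N y) (F N x) + dist (F N z) (F N x) + dist (g z) (F N z) := by
        linarith [dist_triangle4_right (g y) (g z) (F N y) (F N z),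
          dist_triangle_right (F N y) (F N z) (F N x)]
    _ ≤ δ + δ + δ + δ := by
        gcongr
        exacts [hgF N y (interior_subset hyA), (Metric.mem_ball.1 hyx).le,
          (Metric.mem_ball.1 hzx).le, hgF N z (interior_subset hzA)]
    _ = ε := by ring

theorem BaireClass1.exists_isOpen_inter_abs_sub_le [TopologicalSpace.IsCompletelyMetrizableSpace X]
    {g : X → ℝ} (hg : BaireClass1 g) {S : Set X} (hS : S.Nonempty) {ε : ℝ} (hε : 0 < ε) :
    ∃ U : Set X, IsOpen U ∧ (U ∩ S).Nonempty ∧ ∀ y ∈ U ∩ S, ∀ z ∈ U ∩ S, |g y - g z| ≤ ε := by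
  have := (isClosed_closure (s := S)).isCompletelyMetrizableSpace
  have := (closure_nonempty_iff.2 hS).to_subtype
  obtain ⟨W, hW, ⟨x, hxW⟩, hosc⟩ :=
    (hg.comp_continuous (φ := ((↑) : closure S → X)) continuous_subtype_val)
      |>.exists_isOpen_nonempty_abs_sub_le hε
  obtain ⟨U, hU, rfl⟩ := isOpen_induced_iff.1 hW
  have hxU : (x : X) ∈ U ∩ closure S := ⟨hxW, x.2⟩
  refine ⟨U, hU, closure_nonempty_iff.1 ⟨x, hU.inter_closure hxU⟩, ?_⟩
  rintro y ⟨hyU, hyS⟩ z ⟨hzU, hzS⟩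
  exact hosc ⟨y, subset_closure hyS⟩ hyU ⟨z, subset_closure hzS⟩ hzU

end BaireClass1

theorem stmt_7 (X : Type) [TopologicalSpace X] [PolishSpace X] (g : X → ℝ)
    (hnn : ∀ x, 0 ≤ g x) (hbd : ∃ M, ∀ x, |g x| ≤ M) (hb1 : BaireClass1 g)
    (heq : upperReg g = upperReg (fun x => upperReg g x - g x)) :
    ∀ x, g x = 0 := by
  obtain ⟨M, hM⟩ := hbd
  have hgM : ∀ z, g z ≤ M := fun z => (abs_le.1 (hM z)).2
  have hg_reg : ∀ z, g z ≤ upperReg g z := le_upperReg hgM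
  have hgap_M : ∀ z, upperReg g z - g z ≤ M := fun z => by
    linarith [upperReg_le_const hgM z, hnn z]
  by_contra! ⟨x₀, hx₀⟩
  have : Nonempty X := ⟨x₀⟩
  have hbdd : BddAbove (range (upperReg g)) := ⟨M, forall_mem_range.2 (upperReg_le_const hgM)⟩
  set s := ⨆ x, upperReg g x
  have hs : 0 < s :=
    ((hnn x₀).lt_of_ne' hx₀).trans_le ((hg_reg x₀).trans (le_ciSup hbdd x₀))
  obtain ⟨x₁, hx₁⟩ := exists_lt_of_lt_ciSup (show 3 * s / 4 < s by linarith)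
  obtain ⟨U, hU, ⟨x, hxU, hx⟩, hosc⟩ :=
    hb1.exists_isOpen_inter_abs_sub_le (S := {x | 3 * s / 4 < upperReg g x}) ⟨x₁, hx₁⟩
      (show 0 < s / 4 by linarith)
  obtain ⟨z, hzU, hz⟩ := exists_gt_of_lt_upperReg hgM hx hU hxU
  obtain ⟨y, hyU, hy⟩ := exists_gt_of_lt_upperReg hgap_M (heq ▸ hx) hU hxU
  have hy_reg : 3 * s / 4 < upperReg g y := by linarith [hnn y]
  obtain ⟨-, hyz⟩ := abs_le.1 <| hosc z ⟨hzU, hz.trans_le (hg_reg z)⟩ y ⟨hyU, hy_reg⟩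
  linarith [le_ciSup hbdd y]
end
end

section
/- If a pointwise decreasing transfinite sequence (f_α)_{α < ω₁} of upper semicontinuous functions on a Polish space X is indexed by ω₁, then it is eventually constant: there exists ξ < ω₁ such that f_α = f_ξ for all α ≥ ξ. -/
open Ordinal Set

noncomputable section

/-
For a rational `q` the sets `{f α < q}` are open and increase with `α`. In a second
countable space such an `ω₁`-chain of open sets stabilizes, since its union is already the union of
countably many of its members, whose indices are bounded below `ω₁`. Countably many rationals give
countably many stabilization points, again bounded below `ω₁`, and beyond that bound the functions
have the same strict sublevel sets at every rational, hence agree.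
-/

def StabilizesBeforeOmegaOne {α : Type*} (g : Ordinal → α) : Prop :=
  ∃ ξ < ω₁, ∀ a, ξ ≤ a → a < ω₁ → g a = g ξ

namespace StabilizesBeforeOmegaOne

theorem of_isOpen_of_monotone {X : Type*} [TopologicalSpace X] [SecondCountableTopology X]
    {g : Ordinal → Set X} (hopen : ∀ a < ω₁, IsOpen (g a))
    (hmono : ∀ a b, a ≤ b → b < ω₁ → g a ⊆ g b) :
    StabilizesBeforeOmegaOne g := by
  obtain ⟨T, hT, hTunion⟩ := TopologicalSpace.isOpen_iUnion_countable
    (fun a : Iio ω₁ => g a) (fun a => hopen a a.2)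
  have : Countable T := hT.to_subtype
  set ξ := ⨆ i : T, ((i : Iio ω₁) : Ordinal)
  have hξ : ξ < ω₁ := Ordinal.iSup_lt_omega_one fun i => i.1.2
  refine ⟨ξ, hξ, fun a hξa ha => Subset.antisymm ?_ (hmono _ _ hξa ha)⟩
  calc g a ⊆ ⋃ i : Iio ω₁, g i := subset_iUnion_of_subset ⟨a, ha⟩ subset_rfl
    _ = ⋃ i ∈ T, g i := hTunion.symm
    _ ⊆ g ξ := iUnion₂_subset fun i hi =>
      hmono _ _ (Ordinal.le_iSup (fun i : T => ((i : Iio ω₁) : Ordinal)) ⟨i, hi⟩) hξ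

theorem pi {ι : Type*} [Countable ι] {β : ι → Type*} {g : Ordinal → ∀ i, β i}
    (hg : ∀ i, StabilizesBeforeOmegaOne fun a => g a i) : StabilizesBeforeOmegaOne g := by
  choose ξ hξ hstab using hg
  refine ⟨⨆ i, ξ i, Ordinal.iSup_lt_omega_one hξ, fun a hle ha => funext fun i => ?_⟩
  have hi : ξ i ≤ ⨆ i, ξ i := Ordinal.le_iSup ξ i
  exact (hstab i a (hi.trans hle) ha).trans (hstab i _ hi (Ordinal.iSup_lt_omega_one hξ)).symm

theorem of_comp {α β : Type*} {φ : α → β} (hφ : Function.Injective φ) {g : Ordinal → α}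
    (h : StabilizesBeforeOmegaOne (φ ∘ g)) : StabilizesBeforeOmegaOne g :=
  let ⟨ξ, hξ, hstab⟩ := h
  ⟨ξ, hξ, fun a hle ha => hφ (hstab a hle ha)⟩

end StabilizesBeforeOmegaOne

theorem injective_preimage_Iio_ratCast {X : Type*} :
    Function.Injective fun (f : X → ℝ) (q : ℚ) => f ⁻¹' Iio (q : ℝ) := by
  intro f g hfg
  funext x
  by_contra hne
  wlog hlt : f x < g x generalizing f g
  · exact this hfg.symm (Ne.symm hne) ((not_lt.mp hlt).lt_of_ne (Ne.symm hne))
  obtain ⟨q, hfq, hqg⟩ := exists_rat_btwn hlt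
  have hpre : f ⁻¹' Iio (q : ℝ) = g ⁻¹' Iio (q : ℝ) := congrFun hfg q
  exact hqg.not_gt (hpre.subset hfq)

theorem stmt_8 (X : Type) [TopologicalSpace X] [PolishSpace X] (f : Ordinal → X → ℝ)
    (husc : ∀ a, a < (Cardinal.aleph 1).ord → USC (f a))
    (hdec : ∀ a b, a ≤ b → b < (Cardinal.aleph 1).ord → ∀ x, f b x ≤ f a x) :
    ∃ ξ < (Cardinal.aleph 1).ord,
      ∀ a, ξ ≤ a → a < (Cardinal.aleph 1).ord → f a = f ξ := by
  rw [Cardinal.ord_aleph] at husc hdec ⊢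
  exact StabilizesBeforeOmegaOne.of_comp injective_preimage_Iio_ratCast <|
    StabilizesBeforeOmegaOne.pi fun q => StabilizesBeforeOmegaOne.of_isOpen_of_monotone
      (fun a ha => husc a ha q) fun a b hab hb x hx => (hdec a b hab hb x).trans_lt hx
end
end

section
/- Let T be a Suslin tree and D ⊆ T a dense open subset (dense: every t ∈ T has some p ∈ D with t ≤_T p; open: p ∈ D and t ≥_T p implies t ∈ D). Then T \ D is countable. -/
open Ordinal Set

noncomputable section

/-!
Every `t ∉ D` lies below a minimal element of `D`: take a minimal `m ∈ D` below some
`p ∈ D` above `t`; since `t` and `m` are both below `p` they are comparable, and `m ≤ t`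
would put `t` in the open set `D`. So `Dᶜ` is covered by the cones `Iic m` over the
minimal elements `m` of `D`. These form an antichain, hence countably many, and each cone
is a chain, hence countable.
-/

section Tree

variable {T : Type*} [PartialOrder T]

lemma isChain_Iio_of_isWellOrder {t : T}
    (h : IsWellOrder {s : T // s < t} (fun a b => a.1 < b.1)) : IsChain (· ≤ ·) (Iio t) := by
  intro a ha b hb hne
  rcases trichotomous_of (fun a b : {s : T // s < t} => a.1 < b.1) ⟨a, ha⟩ ⟨b, hb⟩ with
    hab | hab | hab
  · exact Or.inl hab.le
  · exact absurd (congrArg Subtype.val hab) hne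
  · exact Or.inr hab.le

lemma IsChain.Iic_of_Iio {t : T} (h : IsChain (· ≤ ·) (Iio t)) : IsChain (· ≤ ·) (Iic t) := by
  rw [← Iio_insert]
  exact h.insert fun b hb _ => Or.inr (le_of_lt hb)

lemma exists_minimal_ge_of_notMem [WellFoundedLT T]
    (htree : ∀ t : T, IsChain (· ≤ ·) (Iic t)) {D : Set T}
    (hdense : ∀ t : T, ∃ p ∈ D, t ≤ p) (hopen : ∀ p ∈ D, ∀ t : T, p ≤ t → t ∈ D)
    {t : T} (ht : t ∉ D) : ∃ m, Minimal (· ∈ D) m ∧ t ≤ m := by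
  obtain ⟨p, hpD, htp⟩ := hdense t
  obtain ⟨m, hmp, hm⟩ := exists_minimal_le_of_wellFoundedLT (· ∈ D) p hpD
  refine ⟨m, hm, ?_⟩
  rcases (htree p).total htp hmp with htm | hmt
  · exact htm
  · exact absurd (hopen m hm.prop t hmt) ht

end Tree

theorem stmt_10_general (T : Type) [PartialOrder T] [WellFoundedLT T]
    (htree : ∀ t : T, IsWellOrder {s : T // s < t} (fun a b => a.1 < b.1))
    (hchain : ∀ C : Set T, IsChain (· ≤ ·) C → C.Countable)
    (hanti : ∀ A : Set T, IsAntichain (· ≤ ·) A → A.Countable)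
    (D : Set T) (hdense : ∀ t : T, ∃ p ∈ D, t ≤ p)
    (hopen : ∀ p ∈ D, ∀ t : T, p ≤ t → t ∈ D) :
    Set.Countable Dᶜ := by
  have hIic : ∀ t : T, IsChain (· ≤ ·) (Iic t) := fun t =>
    (isChain_Iio_of_isWellOrder (htree t)).Iic_of_Iio
  have hcover : Dᶜ ⊆ ⋃ m ∈ {m | Minimal (· ∈ D) m}, Iic m := fun t ht => by
    obtain ⟨m, hm, htm⟩ := exists_minimal_ge_of_notMem hIic hdense hopen ht
    exact mem_biUnion hm htm
  exact ((hanti _ (setOfPred_minimal_antichain _)).biUnion fun m _ => hchain _ (hIic m)).mono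
    hcover

theorem stmt_10 (T : Type) [PartialOrder T] [WellFoundedLT T]
    (htree : ∀ t : T, IsWellOrder {s : T // s < t} (fun a b => a.1 < b.1))
    (hcard : Cardinal.mk T = Cardinal.aleph 1)
    (hlev : ∀ o : Ordinal,
      Set.Countable {t : T | IsWellFounded.rank (α := T) (· < ·) t = o})
    (hchain : ∀ C : Set T, IsChain (· ≤ ·) C → C.Countable)
    (hanti : ∀ A : Set T, IsAntichain (· ≤ ·) A → A.Countable)
    (D : Set T) (hdense : ∀ t : T, ∃ p ∈ D, t ≤ p)
    (hopen : ∀ p ∈ D, ∀ t : T, p ≤ t → t ∈ D) :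
    Set.Countable Dᶜ :=
  stmt_10_general T htree hchain hanti D hdense hopen
end
end

section
/- Let (f_α)_{α < ω₁} be a strictly increasing ω₁-sequence in ([0,1]^{<ω₁}_{↘0}, <_altlex), and suppose s ∈ σ*[0,1] is a strictly decreasing sequence of length β such that {γ < ω₁ : s ⊆ f_γ} contains an end segment of ω₁ for some ordinal β. If β is even, then the map γ ↦ f_γ(β) is order-preserving (non-strictly) on {γ : s ⊆ f_γ, l(f_γ) > β}; if β is odd it is order-reversing. -/
open Ordinal Set

noncomputable section

theorem dOrd_eq_of_eq_of_lt {f g : Ordinal → ℝ} {β : Ordinal}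
    (hfg : ∀ a < β, f a = g a) (hβ : f β ≠ g β) : dOrd f g = β :=
  le_antisymm (csInf_le' hβ) (le_csInf ⟨β, hβ⟩ fun _ ha => not_lt.1 fun h => ha (hfg _ h))

theorem AltLex.le_apply_of_eq_of_lt {f g : Ordinal → ℝ} {β : Ordinal} (h : AltLex f g)
    (hfg : ∀ a < β, f a = g a) :
    (OrdEven β → f β ≤ g β) ∧ (¬ OrdEven β → g β ≤ f β) := by
  by_cases hβ : f β = g β
  · exact ⟨fun _ => hβ.le, fun _ => hβ.ge⟩
  rw [← dOrd_eq_of_eq_of_lt hfg hβ]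
  rcases h.2 with ⟨heven, hlt⟩ | ⟨hodd, hlt⟩
  · exact ⟨fun _ => hlt.le, fun hodd => absurd heven hodd⟩
  · exact ⟨fun heven => absurd heven hodd, fun _ => hlt.le⟩

theorem stmt_11_general (F : Ordinal → Ordinal → ℝ)
    (hinc : ∀ a b, a < b → b < (Cardinal.aleph 1).ord → AltLex (F a) (F b))
    (s : Ordinal → ℝ) (β : Ordinal) :
    ∀ γ γ', γ < γ' → γ' < (Cardinal.aleph 1).ord →
      (∀ a, a < β → F γ a = s a) → (∀ a, a < β → F γ' a = s a) →
      (∃ ξ, IsDSeqLen (F γ) ξ ∧ β ≤ ξ) → (∃ ξ, IsDSeqLen (F γ') ξ ∧ β ≤ ξ) →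
      ((OrdEven β → F γ β ≤ F γ' β) ∧ (¬ OrdEven β → F γ' β ≤ F γ β)) := by
  intro γ γ' hγγ' hγ' hγs hγ's _ _
  exact (hinc γ γ' hγγ' hγ').le_apply_of_eq_of_lt fun a ha => (hγs a ha).trans (hγ's a ha).symm

theorem stmt_11 (F : Ordinal → Ordinal → ℝ)
    (hF : ∀ a, a < (Cardinal.aleph 1).ord → IsDSeq (F a))
    (hinc : ∀ a b, a < b → b < (Cardinal.aleph 1).ord → AltLex (F a) (F b))
    (s : Ordinal → ℝ) (β : Ordinal)
    (hsd : ∀ a b, a < b → b < β → s b < s a)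
    (hs01 : ∀ a, a < β → s a ∈ Set.Icc (0:ℝ) 1)
    (hend : ∃ γ₀, γ₀ < (Cardinal.aleph 1).ord ∧
      ∀ γ, γ₀ ≤ γ → γ < (Cardinal.aleph 1).ord → ∀ a, a < β → F γ a = s a) :
    ∀ γ γ', γ < γ' → γ' < (Cardinal.aleph 1).ord →
      (∀ a, a < β → F γ a = s a) → (∀ a, a < β → F γ' a = s a) →
      (∃ ξ, IsDSeqLen (F γ) ξ ∧ β ≤ ξ) → (∃ ξ, IsDSeqLen (F γ') ξ ∧ β ≤ ξ) →
      ((OrdEven β → F γ β ≤ F γ' β) ∧ (¬ OrdEven β → F γ' β ≤ F γ β)) :=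
  stmt_11_general F hinc s β
end
end

section
/- If L is a linear order and Ψ : L → [0,1]^{<ω₁}_{↘ 0} is strictly order-preserving (with respect to <_altlex), then there is a strictly order-preserving Ψ' : L → [0,1]^{<ω₁}_{↘ 0} such that every Ψ'(p) has even ordinal length. -/
open Ordinal Set

noncomputable section

/- ### Auxiliary lemmas -/

open scoped Classical

universe u v

lemma mod_two_cases (a : Ordinal) : a % 2 = 0 ∨ a % 2 = 1 := by
  have h := Ordinal.mod_lt a (two_ne_zero (α := Ordinal))
  have h1 : a % 2 < 1 + 1 := by rw [one_add_one_eq_two]; exact h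
  rw [Ordinal.add_one_eq_succ] at h1
  exact Ordinal.le_one_iff.1 (Order.lt_succ_iff.1 h1)

lemma ordEven_succ_iff (a : Ordinal) : OrdEven (a + 1) ↔ ¬ OrdEven a := by
  have hd : 2 * (a / 2) + a % 2 = a := Ordinal.div_add_mod a 2
  have key : (a + 1) % 2 = (a % 2 + 1) % 2 := by
    conv_lhs => rw [← hd]
    rw [add_assoc, Ordinal.mul_add_mod_self]
  unfold OrdEven
  rcases mod_two_cases a with h | h
  · rw [key, h, zero_add, Ordinal.mod_eq_of_lt one_lt_two]
    simp [h]
  · rw [key, h, show (1:Ordinal) + 1 = 2 by norm_num, Ordinal.mod_self]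
    simp [h]

lemma lift_mod_two (a : Ordinal.{u}) : lift.{v} a % 2 = lift.{v} (a % 2) := by
  conv_lhs => rw [← Ordinal.div_add_mod a 2]
  rw [Ordinal.lift_add, Ordinal.lift_mul, Ordinal.lift_ofNat, Ordinal.mul_add_mod_self]
  apply Ordinal.mod_eq_of_lt
  have : a % 2 < 2 := Ordinal.mod_lt a (two_ne_zero (α := Ordinal))
  calc lift.{v} (a % 2) < lift.{v} 2 := Ordinal.lift_lt.2 this
    _ = 2 := Ordinal.lift_ofNat 2

lemma ordEven_lift (a : Ordinal.{u}) : OrdEven (lift.{v} a) ↔ OrdEven a := by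
  unfold OrdEven
  rw [lift_mod_two]
  constructor
  · intro h
    have : lift.{v} (a % 2) = lift.{v} 0 := by simpa using h
    exact Ordinal.lift_inj.1 this
  · intro h; simp [h]

/- ### The parity tweak (within one universe) -/

/-- Rescale into `[1/2,1]`, append `1/4` if needed for parity. -/
def tweak (f : Ordinal → ℝ) (ξ : Ordinal) : Ordinal → ℝ := fun a =>
  if a < ξ then f a / 2 + 1/2 else if a = ξ ∧ OrdEven ξ then 1/4 else 0

lemma tweak_lt (f : Ordinal → ℝ) (ξ : Ordinal) {a} (h : a < ξ) :
    tweak f ξ a = f a / 2 + 1/2 := if_pos h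

lemma tweak_small (f : Ordinal → ℝ) (ξ : Ordinal) {a} (h : ¬ a < ξ) :
    tweak f ξ a ≤ 1/4 := by
  rw [tweak, if_neg h]; split_ifs <;> norm_num

lemma tweak_nonneg {f : Ordinal → ℝ} {ξ : Ordinal}
    (hf : ∀ a, f a ∈ Set.Icc (0:ℝ) 1) (a : Ordinal) : 0 ≤ tweak f ξ a := by
  rw [tweak]; split_ifs with h1 h2
  · have := (hf a).1; linarith
  · norm_num
  · exact le_refl 0

lemma fpos {f : Ordinal → ℝ} {ξ : Ordinal} (hf : IsDSeqLen f ξ) {a} (h : a < ξ) :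
    0 < f a := by
  have h1 := hf.2.2.1 a ξ h le_rfl
  have h2 := hf.2.2.2 ξ le_rfl
  linarith

lemma tweak_len {f : Ordinal → ℝ} {ξ : Ordinal} (hf : IsDSeqLen f ξ) :
    IsDSeqLen (tweak f ξ) (if OrdEven ξ then ξ + 1 else ξ) ∧
      OrdEven ((if OrdEven ξ then ξ + 1 else ξ) + 1) := by
  obtain ⟨hbd, hmem, hdec, hz⟩ := hf
  have hmem' : ∀ a, tweak f ξ a ∈ Set.Icc (0:ℝ) 1 := by
    intro a; rw [tweak]; split_ifs with h1 h2
    · exact ⟨by linarith [(hmem a).1], by linarith [(hmem a).2]⟩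
    · norm_num
    · norm_num
  have hdec' : ∀ a b, a < b → b < ξ → tweak f ξ b < tweak f ξ a := by
    intro a b hab hbξ
    have haξ : a < ξ := hab.trans hbξ
    rw [tweak_lt f ξ haξ, tweak_lt f ξ hbξ]
    have := hdec a b hab hbξ.le
    linarith
  by_cases hev : OrdEven ξ
  · rw [if_pos hev]
    refine ⟨⟨?_, hmem', ?_, ?_⟩, ?_⟩
    · rw [Ordinal.add_one_eq_succ]
      exact (Cardinal.isSuccLimit_ord (Cardinal.aleph0_le_aleph 1)).succ_lt hbd
    · intro a b hab hb
      by_cases hbξ : b < ξ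
      · exact hdec' a b hab hbξ
      · have hbsm := tweak_small f ξ hbξ
        by_cases haξ : a < ξ
        · rw [tweak_lt f ξ haξ]
          have := fpos ⟨hbd, hmem, hdec, hz⟩ haξ
          linarith
        · push_neg at haξ hbξ
          have hξb : ξ < b := lt_of_le_of_lt haξ hab
          have hb1 : b = ξ + 1 := le_antisymm hb (by
            rw [Ordinal.add_one_eq_succ]; exact Order.succ_le_iff.2 hξb)
          have ha1 : a = ξ := le_antisymm (by
            have h5 : a < ξ + 1 := hb1 ▸ hab
            rw [Ordinal.add_one_eq_succ] at h5
            exact Order.lt_succ_iff.1 h5) haξ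
          have hbne : b ≠ ξ := by rw [hb1]; exact (lt_add_one ξ).ne'
          have hA : tweak f ξ a = 1/4 := by
            rw [tweak, if_neg (by rw [ha1]; exact lt_irrefl ξ), if_pos ⟨ha1, hev⟩]
          have hB : tweak f ξ b = 0 := by
            rw [tweak, if_neg (not_lt.2 hξb.le), if_neg (by simp [hbne])]
          rw [hA, hB]; norm_num
    · intro a ha
      have haξ : ¬ a < ξ := not_lt.2 ((le_of_lt (lt_add_one ξ)).trans ha)
      have hane : a ≠ ξ := fun h => absurd (h ▸ ha) (not_le.2 (lt_add_one ξ))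
      rw [tweak, if_neg haξ, if_neg (by simp [hane])]
    · rw [ordEven_succ_iff, ordEven_succ_iff]; simpa using hev
  · rw [if_neg hev]
    refine ⟨⟨hbd, hmem', ?_, ?_⟩, ?_⟩
    · intro a b hab hb
      by_cases hbξ : b < ξ
      · exact hdec' a b hab hbξ
      · have hb1 : b = ξ := le_antisymm hb (not_lt.1 hbξ)
        have haξ : a < ξ := hb1 ▸ hab
        rw [tweak_lt f ξ haξ, tweak, if_neg hbξ, if_neg (by simp [hev])]
        have := fpos ⟨hbd, hmem, hdec, hz⟩ haξ
        linarith
    · intro a ha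
      rw [tweak, if_neg (not_lt.2 ha), if_neg (by simp [hev])]
    · rw [ordEven_succ_iff]; exact hev

lemma dOrd_le_left {f g : Ordinal → ℝ} {ξf ξg : Ordinal}
    (hf : IsDSeqLen f ξf) (hg : IsDSeqLen g ξg) (hne : f ≠ g) : dOrd f g ≤ ξf := by
  have hS : {a | f a ≠ g a}.Nonempty := Function.ne_iff.1 hne
  have hdS : f (dOrd f g) ≠ g (dOrd f g) := csInf_mem hS
  have hbelow : ∀ a, a < dOrd f g → f a = g a := by
    intro a ha
    by_contra h'
    exact absurd ha (not_lt.2 (csInf_le' h'))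
  by_contra h'
  push_neg at h'
  have hgle : ξg ≤ ξf := by
    by_contra h2
    push_neg at h2
    have h3 : g ξf = f ξf := (hbelow ξf h').symm
    have h4 : f ξf = 0 := hf.2.2.2 ξf le_rfl
    have h5 : 0 < g ξf := fpos hg h2
    rw [h3, h4] at h5; exact lt_irrefl 0 h5
  have h6 : f (dOrd f g) = 0 := hf.2.2.2 _ h'.le
  have h7 : g (dOrd f g) = 0 := hg.2.2.2 _ (hgle.trans h'.le)
  rw [h6, h7] at hdS; exact hdS rfl

lemma tweak_altLex {f g : Ordinal → ℝ} {ξf ξg : Ordinal} (hf : IsDSeqLen f ξf)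
    (hg : IsDSeqLen g ξg) (h : AltLex f g) : AltLex (tweak f ξf) (tweak g ξg) := by
  obtain ⟨hne, hcase⟩ := h
  set d := dOrd f g with hd
  have hS : {a | f a ≠ g a}.Nonempty := Function.ne_iff.1 hne
  have hdS : f d ≠ g d := csInf_mem hS
  have hbelow : ∀ a, a < d → f a = g a := by
    intro a ha
    by_contra h'
    exact absurd ha (not_lt.2 (csInf_le' h'))
  have hdf : d ≤ ξf := dOrd_le_left hf hg hne
  have hdg : d ≤ ξg := by
    have := dOrd_le_left hg hf (Ne.symm hne)
    rwa [show dOrd g f = d by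
      unfold dOrd; congr 1; ext a; exact ⟨Ne.symm, Ne.symm⟩] at this
  have hbelow' : ∀ a, a < d → tweak f ξf a = tweak g ξg a := by
    intro a ha
    rw [tweak_lt f ξf (ha.trans_le hdf), tweak_lt g ξg (ha.trans_le hdg), hbelow a ha]
  have hdiff : tweak f ξf d ≠ tweak g ξg d ∧ (tweak f ξf d < tweak g ξg d ↔ f d < g d) := by
    rcases lt_or_eq_of_le hdf with hdf' | hdf' <;> rcases lt_or_eq_of_le hdg with hdg' | hdg'
    · rw [tweak_lt f ξf hdf', tweak_lt g ξg hdg']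
      exact ⟨fun h' => hdS (by linarith), ⟨fun h' => by linarith, fun h' => by linarith⟩⟩
    · have h1 : g d = 0 := hg.2.2.2 d hdg'.ge
      have h2 : 0 < f d := fpos hf hdf'
      have h3 : tweak g ξg d ≤ 1/4 := tweak_small g ξg (by rw [← hdg']; exact lt_irrefl d)
      rw [tweak_lt f ξf hdf']
      have h4 : (0:ℝ) ≤ f d := h2.le
      exact ⟨fun h' => by linarith, iff_of_false (by linarith) (by linarith)⟩
    · have h1 : f d = 0 := hf.2.2.2 d hdf'.ge
      have h2 : 0 < g d := fpos hg hdg'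
      have h3 : tweak f ξf d ≤ 1/4 := tweak_small f ξf (by rw [← hdf']; exact lt_irrefl d)
      have h4 : 0 ≤ tweak f ξf d := tweak_nonneg hf.2.1 d
      rw [tweak_lt g ξg hdg']
      exact ⟨fun h' => by linarith, iff_of_true (by linarith) (by linarith)⟩
    · exact absurd (by rw [hf.2.2.2 d hdf'.ge, hg.2.2.2 d hdg'.ge]) hdS
  have hS' : {a | tweak f ξf a ≠ tweak g ξg a}.Nonempty := ⟨d, hdiff.1⟩
  have heq : dOrd (tweak f ξf) (tweak g ξg) = d := by
    refine le_antisymm ?_ ?_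
    · exact csInf_le' (show d ∈ {a | tweak f ξf a ≠ tweak g ξg a} from hdiff.1)
    · exact le_csInf hS' fun b hb => le_of_not_gt fun hbd => hb (hbelow' b hbd)
  refine ⟨fun h' => hdiff.1 (congrFun h' d), ?_⟩
  rw [heq]
  rcases hcase with ⟨hev, hlt⟩ | ⟨hev, hlt⟩
  · exact Or.inl ⟨hev, hdiff.2.mpr hlt⟩
  · refine Or.inr ⟨hev, ?_⟩
    rcases lt_trichotomy (tweak f ξf d) (tweak g ξg d) with h' | h' | h'
    · exact absurd (hdiff.2.mp h') (not_lt.2 hlt.le)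
    · exact absurd h' hdiff.1
    · exact h'

/- ### Transfer between universes -/

/-- `a : Ordinal.{v}` has a copy in `Ordinal.{u}`. -/
def InR (a : Ordinal.{v}) : Prop := ∃ b : Ordinal.{u}, lift.{v} b = lift.{u} a

/-- The copy of `a` in `Ordinal.{u}` (junk value `0` if there is none). -/
def tr (a : Ordinal.{v}) : Ordinal.{u} := if h : InR.{u} a then h.choose else 0

lemma tr_lift {a : Ordinal.{v}} (h : InR.{u} a) : lift.{v} (tr.{u} a) = lift.{u} a := by
  rw [tr, dif_pos h]; exact h.choose_spec

lemma inR_of_le {a a' : Ordinal.{v}} (h : InR.{u} a') (hle : a ≤ a') : InR.{u} a := by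
  obtain ⟨b', hb'⟩ := h
  have : lift.{u} a ≤ lift.{v} b' := by rw [hb']; exact Ordinal.lift_le.2 hle
  obtain ⟨c, hc⟩ := Ordinal.mem_range_lift_of_le this
  exact ⟨c, hc⟩

lemma inR_of_lt_omega1 {a : Ordinal.{v}} (h : a < (Cardinal.aleph 1).ord) :
    InR.{u} a := by
  have h1 : lift.{u} a ≤ lift.{u} (Cardinal.aleph 1).ord := Ordinal.lift_le.2 h.le
  have h2 : lift.{u} (Cardinal.aleph 1).ord =
      lift.{v} ((Cardinal.aleph 1).ord : Ordinal.{u}) := by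
    rw [Cardinal.lift_ord, Cardinal.lift_ord]
    congr 1
    rw [Cardinal.lift_aleph, Cardinal.lift_aleph, Ordinal.lift_one, Ordinal.lift_one]
  rw [h2] at h1
  obtain ⟨c, hc⟩ := Ordinal.mem_range_lift_of_le h1
  exact ⟨c, hc⟩

lemma inR_up {b : Ordinal.{u}} (h : InR.{v} b) : InR.{u} (tr.{v} b : Ordinal.{v}) :=
  ⟨b, (tr_lift h).symm⟩

lemma tr_tr {b : Ordinal.{u}} (h : InR.{v} b) : tr.{u} (tr.{v} b) = b := by
  apply Ordinal.lift_inj.1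
  rw [tr_lift (inR_up h), tr_lift h]

/-- Transfer a sequence to another universe. -/
def transfer (f : Ordinal.{u} → ℝ) : Ordinal.{v} → ℝ := fun a =>
  if InR.{u} a then f (tr.{u} a) else 0

lemma transfer_apply {f : Ordinal.{u} → ℝ} {a : Ordinal.{v}} (h : InR.{u} a) :
    transfer f a = f (tr.{u} a) := if_pos h

lemma inR_omega1 {ξ : Ordinal.{u}} (hξ : ξ < (Cardinal.aleph 1).ord) :
    InR.{u} (tr.{v} ξ) ∧ lift.{u} (tr.{v} ξ : Ordinal.{v}) = lift.{v} ξ ∧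
      (tr.{v} ξ : Ordinal.{v}) < (Cardinal.aleph 1).ord := by
  have hR : InR.{v} ξ := inR_of_lt_omega1 hξ
  refine ⟨inR_up hR, tr_lift hR, ?_⟩
  have h2 : lift.{u} ((Cardinal.aleph 1).ord : Ordinal.{v}) =
      lift.{v} ((Cardinal.aleph 1).ord : Ordinal.{u}) := by
    rw [Cardinal.lift_ord, Cardinal.lift_ord]
    congr 1
    rw [Cardinal.lift_aleph, Cardinal.lift_aleph, Ordinal.lift_one, Ordinal.lift_one]
  rw [← Ordinal.lift_lt.{u,v}, tr_lift hR, h2]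
  exact Ordinal.lift_lt.2 hξ

lemma transfer_isDSeqLen {f : Ordinal.{u} → ℝ} {ξ : Ordinal.{u}}
    (hf : IsDSeqLen f ξ) : IsDSeqLen (transfer.{u,v} f) (tr.{v} ξ) := by
  obtain ⟨hbd, hmem, hdec, hz⟩ := hf
  obtain ⟨hRξ, hliftξ, hξlt⟩ := inR_omega1.{u,v} hbd
  have hRofle : ∀ a : Ordinal.{v}, a ≤ tr.{v} ξ → InR.{u} a := fun a ha =>
    inR_of_le hRξ ha
  refine ⟨hξlt, ?_, ?_, ?_⟩
  · intro a
    rw [transfer]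
    split_ifs
    · exact hmem _
    · exact ⟨le_refl 0, zero_le_one⟩
  · intro a b hab hb
    have hRb : InR.{u} b := hRofle b hb
    have hRa : InR.{u} a := hRofle a (hab.le.trans hb)
    rw [transfer_apply hRa, transfer_apply hRb]
    apply hdec
    · rw [← Ordinal.lift_lt.{v,u}, tr_lift hRa, tr_lift hRb]
      exact Ordinal.lift_lt.2 hab
    · rw [← Ordinal.lift_le.{v,u}, tr_lift hRb, ← hliftξ]
      exact Ordinal.lift_le.2 hb
  · intro a ha
    rw [transfer]
    split_ifs with hR
    · apply hz
      rw [← Ordinal.lift_le.{v,u}, tr_lift hR, ← hliftξ]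
      exact Ordinal.lift_le.2 ha
    · rfl

lemma transfer_altLex {f g : Ordinal.{u} → ℝ} {ξf ξg : Ordinal.{u}}
    (hf : IsDSeqLen f ξf) (hg : IsDSeqLen g ξg) (h : AltLex f g) :
    AltLex (transfer.{u,v} f) (transfer.{u,v} g) := by
  obtain ⟨hne, hcase⟩ := h
  set d := dOrd f g with hd
  have hS : {a | f a ≠ g a}.Nonempty := Function.ne_iff.1 hne
  have hdS : f d ≠ g d := csInf_mem hS
  have hbelow : ∀ a, a < d → f a = g a := by
    intro a ha
    by_contra h'
    exact absurd ha (not_lt.2 (csInf_le' h'))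
  have hdf : d ≤ ξf := dOrd_le_left hf hg hne
  have hdlt : d < (Cardinal.aleph 1).ord := lt_of_le_of_lt hdf hf.1
  obtain ⟨hRd, hliftd, _⟩ := inR_omega1.{u,v} hdlt
  have htrd : tr.{u} (tr.{v} d) = d := tr_tr (inR_of_lt_omega1 hdlt)
  set d₂ : Ordinal.{v} := tr.{v} d with hd₂
  have hvald : transfer.{u,v} f d₂ = f d ∧ transfer.{u,v} g d₂ = g d := by
    rw [transfer_apply hRd, transfer_apply hRd, htrd]
    exact ⟨rfl, rfl⟩
  have hbelow₂ : ∀ a, a < d₂ → transfer.{u,v} f a = transfer.{u,v} g a := by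
    intro a ha
    have hRa : InR.{u} a := inR_of_le hRd ha.le
    rw [transfer_apply hRa, transfer_apply hRa]
    apply hbelow
    rw [← Ordinal.lift_lt.{v,u}, tr_lift hRa, ← hliftd]
    exact Ordinal.lift_lt.2 ha
  have hdiff₂ : transfer.{u,v} f d₂ ≠ transfer.{u,v} g d₂ := by
    rw [hvald.1, hvald.2]; exact hdS
  have heq : dOrd (transfer.{u,v} f) (transfer.{u,v} g) = d₂ := by
    refine le_antisymm ?_ ?_
    · exact csInf_le' (show d₂ ∈ {a | transfer.{u,v} f a ≠ transfer.{u,v} g a} from hdiff₂)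
    · exact le_csInf ⟨d₂, hdiff₂⟩ fun b hb => le_of_not_gt fun hbd => hb (hbelow₂ b hbd)
  have hevd : OrdEven d₂ ↔ OrdEven d := by
    rw [← ordEven_lift.{v,u} d₂, hliftd, ordEven_lift]
  refine ⟨fun h' => hdiff₂ (congrFun h' d₂), ?_⟩
  rw [heq, hvald.1, hvald.2]
  rcases hcase with ⟨hev, hlt⟩ | ⟨hev, hlt⟩
  · exact Or.inl ⟨hevd.2 hev, hlt⟩
  · exact Or.inr ⟨fun h' => hev (hevd.1 h'), hlt⟩

lemma ordEven_tr_succ {η : Ordinal.{u}} (hlt : η < (Cardinal.aleph 1).ord)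
    (h : OrdEven (η + 1)) : OrdEven ((tr.{v} η : Ordinal.{v}) + 1) := by
  obtain ⟨_, hlift, _⟩ := inR_omega1.{u,v} hlt
  rw [← ordEven_lift.{v,u}, Ordinal.add_one_eq_succ, Ordinal.lift_succ, hlift,
    ← Ordinal.lift_succ, ← Ordinal.add_one_eq_succ, ordEven_lift]
  exact h

theorem stmt_13 (L : Type) [LinearOrder L] (Ψ : L → Ordinal → ℝ)
    (hΨd : ∀ p, IsDSeq (Ψ p)) (hΨ : ∀ p q : L, p < q → AltLex (Ψ p) (Ψ q)) :
    ∃ Ψ' : L → Ordinal → ℝ,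
      (∀ p, ∃ ξ, IsDSeqLen (Ψ' p) ξ ∧ OrdEven (ξ + 1)) ∧
      ∀ p q : L, p < q → AltLex (Ψ' p) (Ψ' q) := by
  choose ξ hξ using hΨd
  refine ⟨fun p => transfer (tweak (Ψ p) (ξ p)), fun p => ?_, fun p q hpq =>
    transfer_altLex (tweak_len (hξ p)).1 (tweak_len (hξ q)).1
      (tweak_altLex (hξ p) (hξ q) (hΨ p q hpq))⟩
  obtain ⟨hlen, hpar⟩ := tweak_len (hξ p)
  exact ⟨tr (if OrdEven (ξ p) then ξ p + 1 else ξ p), transfer_isDSeqLen hlen,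
    ordEven_tr_succ hlen.1 hpar⟩
end
end

section
/- Let L and, for each p ∈ L, L_p be linear orders, each admitting a strictly order-preserving map into ([0,1]^{<ω₁}_{↘0}, <_altlex). Then the lexicographic gluing {(p,q) : p ∈ L, q ∈ L_p}, ordered by (p,q) < (p',q') iff p < p' or (p = p' and q <_{L_p} q'), also admits a strictly order-preserving map into ([0,1]^{<ω₁}_{↘0}, <_altlex). -/
open Ordinal Set

noncomputable section

/-! Send `(p, q)` to the sequence that starts with `(1 + Ψ p) / 2`, which lies in `[1/2, 1]` and
ends at `1/2`, pads with the value `5/12` up to the next even index `c_p`, and continues with the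
code of `q` scaled into `[0, 1/3]`. Two points in different fibres first differ inside the head,
where the order is that of `Ψ`; two points of one fibre first differ at `c_p + δ`, which has the
parity of `δ` because `c_p` is even. -/

universe u v

def AltLexAt (f g : Ordinal → ℝ) (d : Ordinal) : Prop :=
  (∀ a < d, f a = g a) ∧ (OrdEven d ∧ f d < g d ∨ ¬ OrdEven d ∧ g d < f d)

theorem AltLexAt.ne {f g : Ordinal → ℝ} {d : Ordinal} (h : AltLexAt f g d) : f d ≠ g d := by
  rcases h.2 with ⟨-, h⟩ | ⟨-, h⟩
  exacts [h.ne, h.ne']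

theorem altLex_iff_exists_altLexAt {f g : Ordinal → ℝ} : AltLex f g ↔ ∃ d, AltLexAt f g d := by
  constructor
  · rintro ⟨-, hd⟩
    exact ⟨dOrd f g, fun a ha => not_not.1 fun h => (csInf_le' h).not_gt ha, hd⟩
  · rintro ⟨d, hd⟩
    have hdOrd : dOrd f g = d := le_antisymm (csInf_le' hd.ne) <|
      le_csInf ⟨d, hd.ne⟩ fun a ha => not_lt.1 fun h => ha (hd.1 a h)
    refine ⟨fun h => hd.ne (congrFun h d), ?_⟩
    rw [hdOrd]
    exact hd.2

section Parity

theorem ordEven_iff_exists_two_mul {a : Ordinal} : OrdEven a ↔ ∃ k, a = 2 * k := by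
  refine ⟨fun h => ⟨a / 2, ?_⟩, ?_⟩
  · simpa [show a % 2 = 0 from h] using (div_add_mod a 2).symm
  · rintro ⟨k, rfl⟩
    exact mul_mod 2 k

theorem ordEven_add_iff {c : Ordinal} (hc : OrdEven c) (d : Ordinal) :
    OrdEven (c + d) ↔ OrdEven d := by
  obtain ⟨k, rfl⟩ := ordEven_iff_exists_two_mul.1 hc
  rw [OrdEven, OrdEven, ← div_add_mod d 2, ← add_assoc, ← mul_add, mul_add_mod_self,
    mul_add_mod_self]

theorem ordEven_lift_iff {a : Ordinal.{u}} : OrdEven (lift.{v} a) ↔ OrdEven a := by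
  simp only [ordEven_iff_exists_two_mul]
  refine ⟨fun ⟨k, hk⟩ => ?_, fun ⟨k, hk⟩ => ⟨lift.{v} k, by rw [hk, lift_mul, lift_ofNat]⟩⟩
  obtain ⟨k, rfl⟩ := mem_range_lift_of_le (hk ▸ le_mul_right k two_pos)
  exact ⟨k, lift_inj.1 (by rw [hk, lift_mul, lift_ofNat])⟩

theorem ordEven_iff_of_lift_eq {a : Ordinal.{u}} {b : Ordinal.{v}}
    (h : lift.{v} a = lift.{u} b) : OrdEven a ↔ OrdEven b := by
  rw [← ordEven_lift_iff.{u, v}, h, ordEven_lift_iff]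

def nextEven (ξ : Ordinal) : Ordinal := 2 * (ξ / 2 + 1)

theorem ordEven_nextEven (ξ : Ordinal) : OrdEven (nextEven ξ) := mul_mod 2 _

theorem nextEven_eq (ξ : Ordinal) : nextEven ξ = 2 * (ξ / 2) + 2 := by
  rw [nextEven, mul_add, mul_one]

theorem lt_nextEven (ξ : Ordinal) : ξ < nextEven ξ := by
  conv_lhs => rw [← div_add_mod ξ 2]
  rw [nextEven_eq]
  exact add_lt_add_right (mod_lt ξ two_ne_zero) _

theorem nextEven_le_add_two (ξ : Ordinal) : nextEven ξ ≤ ξ + 2 := by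
  conv_rhs => rw [← div_add_mod ξ 2]
  rw [nextEven_eq, add_assoc]
  exact add_le_add_right le_add_self _

theorem nextEven_le_of_lt_of_lt {ξ a b : Ordinal} (hξa : ξ < a) (hab : a < b) :
    nextEven ξ ≤ b :=
  calc nextEven ξ ≤ ξ + 1 + 1 := by rw [add_assoc, one_add_one_eq_two]; exact nextEven_le_add_two ξ
    _ ≤ a + 1 := add_le_add_left (Order.add_one_le_of_lt hξa) 1
    _ ≤ b := Order.add_one_le_of_lt hab

end Parity

theorem IsDSeqLen.le_of_eqOn_of_ne {f g : Ordinal → ℝ} {ξ ζ d : Ordinal} (hf : IsDSeqLen f ξ)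
    (hg : IsDSeqLen g ζ) (heq : ∀ a < d, f a = g a) (hne : f d ≠ g d) : d ≤ ξ := by
  by_contra! hξd
  have hgξ : g ξ = 0 := (heq ξ hξd).symm.trans (hf.2.2.2 ξ le_rfl)
  have hgd : g d = 0 := by
    rcases le_or_gt ζ d with hζd | hdζ
    · exact hg.2.2.2 d hζd
    · have := hg.2.2.1 ξ d hξd hdζ.le
      linarith [(hg.2.1 d).1]
  exact hne (by rw [hgd, hf.2.2.2 d hξd.le])

theorem AltLexAt.le_of_isDSeqLen {f g : Ordinal → ℝ} {ξ ζ d : Ordinal} (h : AltLexAt f g d)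
    (hf : IsDSeqLen f ξ) (hg : IsDSeqLen g ζ) : d ≤ ξ ∧ d ≤ ζ :=
  ⟨hf.le_of_eqOn_of_ne hg h.1 h.ne,
    hg.le_of_eqOn_of_ne hf (fun a ha => (h.1 a ha).symm) h.ne.symm⟩

theorem AltLexAt.shift {f g F G : Ordinal → ℝ} {φ : ℝ → ℝ} {c d : Ordinal}
    (h : AltLexAt f g d) (hc : OrdEven c) (hφ : StrictMono φ) (hlow : ∀ a < c, F a = G a)
    (hF : ∀ b ≤ d, F (c + b) = φ (f b)) (hG : ∀ b ≤ d, G (c + b) = φ (g b)) :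
    AltLexAt F G (c + d) := by
  refine ⟨fun a ha => ?_, ?_⟩
  · rcases lt_or_ge a c with hac | hca
    · exact hlow a hac
    · obtain ⟨b, rfl⟩ := exists_add_of_le hca
      have hbd : b < d := lt_of_add_lt_add_left ha
      rw [hF b hbd.le, hG b hbd.le, h.1 b hbd]
  · rw [hF d le_rfl, hG d le_rfl, ordEven_add_iff hc, hφ.lt_iff_lt, hφ.lt_iff_lt]
    exact h.2

section Transfer

open Classical in
/-- The hypotheses and the conclusion of the theorem use independent universes of ordinals;
sequences are moved between them by identifying ordinals with equal lifts. -/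
def transferSeq (f : Ordinal.{u} → ℝ) (b : Ordinal.{v}) : ℝ :=
  if h : ∃ a : Ordinal.{u}, lift.{v} a = lift.{u} b then f h.choose else 0

theorem transferSeq_eq {f : Ordinal.{u} → ℝ} {a : Ordinal.{u}} {b : Ordinal.{v}}
    (h : lift.{v} a = lift.{u} b) : transferSeq f b = f a := by
  have hex : ∃ a', lift.{v} a' = lift.{u} b := ⟨a, h⟩
  rw [transferSeq, dif_pos hex, lift_inj.1 (hex.choose_spec.trans h.symm)]

theorem exists_lift_eq_of_le {a : Ordinal.{u}} {b : Ordinal.{v}} (h : lift.{u} b ≤ lift.{v} a) :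
    ∃ a' : Ordinal.{u}, lift.{v} a' = lift.{u} b :=
  mem_range_lift_of_le h

theorem lift_aleph_one_ord :
    lift.{v} (Cardinal.aleph 1).ord.{u} = lift.{u} (Cardinal.aleph 1).ord.{v} := by
  simp

theorem exists_lift_eq_of_lt_aleph_one {a : Ordinal.{u}} (h : a < (Cardinal.aleph 1).ord) :
    ∃ b : Ordinal.{v}, lift.{u} b = lift.{v} a := by
  refine exists_lift_eq_of_le (a := ((Cardinal.aleph 1).ord : Ordinal.{v})) (le_of_lt ?_)
  rwa [← lift_aleph_one_ord, lift_lt]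

theorem IsDSeqLen.transferSeq {f : Ordinal.{u} → ℝ} {ξ : Ordinal.{u}} {ξ' : Ordinal.{v}}
    (hf : IsDSeqLen f ξ) (hξ : lift.{u} ξ' = lift.{v} ξ) : IsDSeqLen (transferSeq f) ξ' := by
  obtain ⟨hω, hmem, hanti, hzero⟩ := hf
  have hdown : ∀ a ≤ ξ', ∃ a₀ ≤ ξ, lift.{v} a₀ = lift.{u} a := fun a ha => by
    obtain ⟨a₀, h₀⟩ := exists_lift_eq_of_le (a := ξ) (b := a) (hξ ▸ lift_le.2 ha)
    exact ⟨a₀, by rwa [← lift_le.{v}, h₀, ← hξ, lift_le], h₀⟩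
  refine ⟨?_, fun a => ?_, fun a b hab hb => ?_, fun a ha => ?_⟩
  · rwa [← lift_lt.{u}, hξ, ← lift_aleph_one_ord, lift_lt]
  · unfold _root_.transferSeq
    split_ifs
    exacts [hmem _, ⟨le_rfl, zero_le_one⟩]
  · obtain ⟨a₀, -, ha₀⟩ := hdown a (hab.le.trans hb)
    obtain ⟨b₀, hb₀, hb₀'⟩ := hdown b hb
    rw [transferSeq_eq ha₀, transferSeq_eq hb₀']
    exact hanti a₀ b₀ (by rwa [← lift_lt.{v}, ha₀, hb₀', lift_lt]) hb₀
  · by_cases hex : ∃ a₀ : Ordinal.{u}, lift.{v} a₀ = lift.{u} a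
    · obtain ⟨a₀, ha₀⟩ := hex
      rw [transferSeq_eq ha₀]
      exact hzero a₀ (by rwa [← lift_le.{v}, ha₀, ← hξ, lift_le])
    · rw [_root_.transferSeq, dif_neg hex]

theorem IsDSeq.transferSeq {f : Ordinal.{u} → ℝ} (hf : IsDSeq f) :
    IsDSeq (transferSeq.{u, v} f) := by
  obtain ⟨ξ, hξ⟩ := hf
  obtain ⟨ξ', hξ'⟩ := exists_lift_eq_of_lt_aleph_one.{u, v} hξ.1
  exact ⟨ξ', hξ.transferSeq hξ'⟩

theorem AltLexAt.transferSeq {f g : Ordinal.{u} → ℝ} {d : Ordinal.{u}} {d' : Ordinal.{v}}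
    (h : AltLexAt f g d) (hd : lift.{u} d' = lift.{v} d) :
    AltLexAt (transferSeq f) (transferSeq g) d' := by
  refine ⟨fun a ha => ?_, ?_⟩
  · obtain ⟨a₀, ha₀⟩ := exists_lift_eq_of_le (a := d) (b := a) (hd ▸ lift_le.2 ha.le)
    rw [transferSeq_eq ha₀, transferSeq_eq ha₀,
      h.1 a₀ (by rwa [← lift_lt.{v}, ha₀, ← hd, lift_lt])]
  · rw [transferSeq_eq hd.symm, transferSeq_eq hd.symm, ordEven_iff_of_lift_eq hd]
    exact h.2

theorem AltLex.transferSeq {f g : Ordinal.{u} → ℝ} (hf : IsDSeq f) (hg : IsDSeq g)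
    (h : AltLex f g) : AltLex (transferSeq.{u, v} f) (transferSeq g) := by
  obtain ⟨ξ, hξ⟩ := hf
  obtain ⟨ζ, hζ⟩ := hg
  obtain ⟨d, hd⟩ := altLex_iff_exists_altLexAt.1 h
  obtain ⟨d', hd'⟩ :=
    exists_lift_eq_of_lt_aleph_one.{u, v} ((hd.le_of_isDSeqLen hξ hζ).1.trans_lt hξ.1)
  exact altLex_iff_exists_altLexAt.2 ⟨d', hd.transferSeq hd'⟩

end Transfer

section Glue

variable {f f' g g' : Ordinal → ℝ} {ξ ξ' η a : Ordinal}

def glue (f : Ordinal → ℝ) (ξ : Ordinal) (g : Ordinal → ℝ) (a : Ordinal) : ℝ :=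
  if a ≤ ξ then (1 + f a) / 2 else if a < nextEven ξ then 5 / 12 else g (a - nextEven ξ) / 3

theorem glue_of_le (h : a ≤ ξ) : glue f ξ g a = (1 + f a) / 2 := if_pos h

theorem glue_of_lt_of_lt (hξa : ξ < a) (ha : a < nextEven ξ) : glue f ξ g a = 5 / 12 := by
  rw [glue, if_neg hξa.not_ge, if_pos ha]

theorem glue_of_nextEven_le (h : nextEven ξ ≤ a) : glue f ξ g a = g (a - nextEven ξ) / 3 := by
  rw [glue, if_neg ((lt_nextEven ξ).trans_le h).not_ge, if_neg h.not_gt]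

theorem glue_nextEven_add (b : Ordinal) : glue f ξ g (nextEven ξ + b) = g b / 3 := by
  rw [glue_of_nextEven_le le_self_add, Ordinal.add_sub_cancel]

theorem glue_eq_of_lt_nextEven (ha : a < nextEven ξ) : glue f ξ g a = glue f ξ g' a := by
  simp only [glue, ha, if_true]

theorem five_twelfths_le_glue (hf : ∀ a, f a ∈ Icc (0 : ℝ) 1) (ha : a < nextEven ξ) :
    5 / 12 ≤ glue f ξ g a := by
  rcases le_or_gt a ξ with haξ | hξa
  · rw [glue_of_le haξ]
    linarith [(hf a).1]
  · rw [glue_of_lt_of_lt hξa ha]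

theorem glue_le_one_third (hg : ∀ a, g a ∈ Icc (0 : ℝ) 1) (ha : nextEven ξ ≤ a) :
    glue f ξ g a ≤ 1 / 3 := by
  rw [glue_of_nextEven_le ha]
  linarith [(hg (a - nextEven ξ)).2]

theorem IsDSeqLen.glue (hf : IsDSeqLen f ξ) (hg : IsDSeqLen g η) :
    IsDSeqLen (glue f ξ g) (nextEven ξ + η) := by
  obtain ⟨hξω, hfmem, hfanti, hfzero⟩ := hf
  obtain ⟨hηω, hgmem, hganti, hgzero⟩ := hg
  have hω := Cardinal.isSuccLimit_ord (Cardinal.aleph0_le_aleph 1)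
  refine ⟨?_, fun a => ?_, fun a b hab hb => ?_, fun a ha => ?_⟩
  · have hcω : nextEven ξ < (Cardinal.aleph 1).ord :=
      (nextEven_le_add_two ξ).trans_lt <| by
        rw [← one_add_one_eq_two, ← add_assoc]
        exact hω.add_one_lt (hω.add_one_lt hξω)
    exact Ordinal.isPrincipal_add_ord (Cardinal.aleph0_le_aleph 1) hcω hηω
  · rcases le_or_gt a ξ with haξ | hξa
    · rw [glue_of_le haξ]
      obtain ⟨h₀, h₁⟩ := hfmem a
      constructor <;> linarith
    rcases lt_or_ge a (nextEven ξ) with ha | ha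
    · rw [glue_of_lt_of_lt hξa ha]
      norm_num
    · rw [glue_of_nextEven_le ha]
      obtain ⟨h₀, h₁⟩ := hgmem (a - nextEven ξ)
      constructor <;> linarith
  · rcases le_or_gt b ξ with hbξ | hξb
    · rw [glue_of_le hbξ, glue_of_le (hab.le.trans hbξ)]
      linarith [hfanti a b hab hbξ]
    rcases lt_or_ge b (nextEven ξ) with hbc | hcb
    · have haξ : a ≤ ξ := not_lt.1 fun hξa => (nextEven_le_of_lt_of_lt hξa hab).not_gt hbc
      rw [glue_of_le haξ, glue_of_lt_of_lt hξb hbc]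
      linarith [(hfmem a).1]
    rcases lt_or_ge a (nextEven ξ) with hac | hca
    · linarith [five_twelfths_le_glue (g := g) hfmem hac, glue_le_one_third (f := f) hgmem hcb]
    · obtain ⟨a', rfl⟩ := exists_add_of_le hca
      obtain ⟨b', rfl⟩ := exists_add_of_le hcb
      rw [glue_nextEven_add, glue_nextEven_add]
      linarith [hganti a' b' (lt_of_add_lt_add_left hab) ((add_le_add_iff_left _).1 hb)]
  · obtain ⟨b, rfl⟩ := exists_add_of_le (le_self_add.trans ha)
    rw [glue_nextEven_add, hgzero b ((add_le_add_iff_left _).1 ha), _root_.zero_div]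

theorem AltLex.glue_left (hf : IsDSeqLen f ξ) (hf' : IsDSeqLen f' ξ') (h : AltLex f f') :
    AltLex (glue f ξ g) (glue f' ξ' g') := by
  obtain ⟨d, hd⟩ := altLex_iff_exists_altLexAt.1 h
  obtain ⟨hdξ, hdξ'⟩ := hd.le_of_isDSeqLen hf hf'
  have hφ : StrictMono fun x : ℝ => (1 + x) / 2 := fun x y hxy => by dsimp only; linarith
  have := hd.shift (F := glue f ξ g) (G := glue f' ξ' g') (zero_mod 2) hφ
    (fun _ ha => (not_lt_zero ha).elim)
    (fun b hb => by rw [zero_add, glue_of_le (hb.trans hdξ)])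
    (fun b hb => by rw [zero_add, glue_of_le (hb.trans hdξ')])
  rw [zero_add] at this
  exact altLex_iff_exists_altLexAt.2 ⟨d, this⟩

theorem AltLex.glue_right (h : AltLex g g') : AltLex (glue f ξ g) (glue f ξ g') := by
  obtain ⟨d, hd⟩ := altLex_iff_exists_altLexAt.1 h
  have hφ : StrictMono fun x : ℝ => x / 3 := fun x y hxy => by dsimp only; linarith
  exact altLex_iff_exists_altLexAt.2 ⟨_, hd.shift (ordEven_nextEven ξ) hφ
    (fun a ha => glue_eq_of_lt_nextEven ha) (fun b _ => glue_nextEven_add b)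
    (fun b _ => glue_nextEven_add b)⟩

end Glue

theorem stmt_14 (L : Type) [LinearOrder L] (Lp : L → Type) [∀ p, LinearOrder (Lp p)]
    (hL : ∃ Ψ : L → Ordinal → ℝ, (∀ p, IsDSeq (Ψ p)) ∧
      ∀ p q : L, p < q → AltLex (Ψ p) (Ψ q))
    (hLp : ∀ p, ∃ Ψ : Lp p → Ordinal → ℝ, (∀ q, IsDSeq (Ψ q)) ∧
      ∀ q q' : Lp p, q < q' → AltLex (Ψ q) (Ψ q')) :
    ∃ Φ : (Σ p : L, Lp p) → Ordinal → ℝ, (∀ x, IsDSeq (Φ x)) ∧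
      (∀ (p p' : L) (q : Lp p) (q' : Lp p'), p < p' → AltLex (Φ ⟨p, q⟩) (Φ ⟨p', q'⟩)) ∧
      (∀ (p : L) (q q' : Lp p), q < q' → AltLex (Φ ⟨p, q⟩) (Φ ⟨p, q'⟩)) := by
  obtain ⟨Ψ, hΨ, hΨlt⟩ := hL
  choose Ψq hΨq hΨqlt using hLp
  choose ξ hξ using fun p => (hΨ p).transferSeq
  refine ⟨fun x => glue (transferSeq (Ψ x.1)) (ξ x.1) (transferSeq (Ψq x.1 x.2)), ?_, ?_, ?_⟩
  · rintro ⟨p, q⟩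
    obtain ⟨η, hη⟩ := (hΨq p q).transferSeq
    exact ⟨_, (hξ p).glue hη⟩
  · intro p p' q q' hpp'
    exact ((hΨlt p p' hpp').transferSeq (hΨ p) (hΨ p')).glue_left (hξ p) (hξ p')
  · intro p q q' hqq'
    exact ((hΨqlt p q q' hqq').transferSeq (hΨq p q) (hΨq p q')).glue_right
end
end

section
/- Say a linear order L has property (*) if every uncountable subset of L contains an uncountable subset order-isomorphic to a set of real numbers. If a linear order L has property (*), then for every countable ordinal α the lexicographic power L^α also has property (*). -/
open Ordinal Set

noncomputable section

/-- Property (*): every uncountable subset contains an uncountable subset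
order-isomorphic to a set of reals. -/
def PropStarRel (α : Type*) (r : α → α → Prop) : Prop :=
  ∀ A : Set α, ¬ A.Countable → ∃ B ⊆ A, ¬ B.Countable ∧
    ∃ g : α → ℝ, (∀ x ∈ B, ∀ y ∈ B, r x y → g x < g y) ∧ Set.InjOn g B

/-- The lexicographic order on the power `L^a`. -/
def LexPowRel (L : Type) [LinearOrder L] (a : Ordinal) :
    ({b : Ordinal // b < a} → L) → ({b : Ordinal // b < a} → L) → Prop :=
  fun x y => ∃ δ : {b : Ordinal // b < a},
    (∀ γ : {b : Ordinal // b < a}, γ.1 < δ.1 → x γ = y γ) ∧ x δ < y δ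

/-!
Induction on `a`. Let `A ⊆ L^a` be uncountable. If the restriction of `A` to some `L^b`,
`b < a`, is uncountable, the induction hypothesis applies there: restriction is monotone, so it is
strictly monotone on a set of representatives. Otherwise, for `a = c + 1` some fibre of the
restriction to `L^c` is uncountable, and on it the order is that of the last coordinate, so (*)
for `L` applies. For `a` limit (or `0`) the countably many down-sets `{x | x↾b ≤ s}`, `b < a`,
`s ∈ A↾b`, separate the points of `A`, and a weighted sum of their indicators embeds `A` into `ℝ`.
-/

open Order Cardinal

section PropStar

variable {X Y : Type*}

theorem propStarRel_of_forall_exists_strictMonoOn [LinearOrder X]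
    (h : ∀ A : Set X, ¬A.Countable → ∃ B ⊆ A, ¬B.Countable ∧ ∃ g : X → ℝ, StrictMonoOn g B) :
    PropStarRel X (· < ·) := by
  intro A hA
  obtain ⟨B, hBA, hB, g, hg⟩ := h A hA
  exact ⟨B, hBA, hB, g, fun _ hx _ hy => hg hx hy, hg.injOn⟩

theorem exists_strictMonoOn_of_countable_separating [Preorder X] {ι : Type*} [Countable ι]
    {D : ι → Set X} (hD : ∀ i, IsLowerSet (D i)) {B : Set X}
    (hsep : ∀ x ∈ B, ∀ y ∈ B, x < y → ∃ i, x ∈ D i ∧ y ∉ D i) :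
    ∃ g : X → ℝ, StrictMonoOn g B := by
  classical
  obtain ⟨e, he⟩ := Countable.exists_injective_nat ι
  set w : ι → ℝ := fun i => (1 / 2) ^ e i
  have hw : Summable w := summable_geometric_two.comp_injective he
  set term : X → ι → ℝ := fun x i => if x ∈ D i then 0 else w i
  have hterm_nonneg (x : X) (i : ι) : 0 ≤ term x i := by
    simp only [term]; split_ifs <;> positivity
  have hterm_summable (x : X) : Summable (term x) :=
    hw.of_nonneg_of_le (hterm_nonneg x) fun i => by
      simp only [term]; split_ifs <;> simp [w]
  have hterm_mono {x y : X} (hxy : x ≤ y) (i : ι) : term x i ≤ term y i := by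
    by_cases hy : y ∈ D i
    · simp [term, hy, hD i hxy hy]
    · simp only [term, hy, if_false]; split_ifs <;> simp [w]
  refine ⟨fun x => ∑' i, term x i, fun x hx y hy hxy => ?_⟩
  obtain ⟨i, hxi, hyi⟩ := hsep x hx y hy hxy
  exact (hterm_summable x).tsum_lt_tsum (hterm_mono hxy.le) (i := i)
    (by simp [term, hxi, hyi, w]) (hterm_summable y)

theorem exists_uncountable_strictMonoOn_of_monotoneOn [Preorder X] [PartialOrder Y]
    (hY : PropStarRel Y (· < ·)) {f : X → Y} {A : Set X} (hf : MonotoneOn f A)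
    (hA : ¬(f '' A).Countable) : ∃ B ⊆ A, ¬B.Countable ∧ ∃ g : X → ℝ, StrictMonoOn g B := by
  obtain ⟨C, hCA, hC, g, hg, -⟩ := hY _ hA
  obtain ⟨A', hA'A, hbij⟩ := exists_subset_bijOn A f
  refine ⟨A' ∩ f ⁻¹' C, inter_subset_left.trans hA'A, fun hB => hC ?_, g ∘ f, ?_⟩
  · refine Countable.mono (fun c hc => ?_) (hB.image f)
    obtain ⟨x, hx, rfl⟩ := hbij.surjOn (hCA hc)
    exact mem_image_of_mem f ⟨hx, hc⟩
  · intro x hx y hy hxy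
    have hne : f x ≠ f y := fun h => hxy.ne (hbij.injOn hx.1 hy.1 h)
    exact hg _ hx.2 _ hy.2 ((hf (hA'A hx.1) (hA'A hy.1) hxy.le).lt_of_ne hne)

theorem exists_not_countable_inter_preimage_singleton {f : X → Y} {A : Set X}
    (hA : ¬A.Countable) (hf : (f '' A).Countable) : ∃ y, ¬(A ∩ f ⁻¹' {y}).Countable := by
  by_contra! h
  refine hA (Countable.mono (fun x hx => ?_)
    ((hf.biUnion_iff (t := fun y _ => A ∩ f ⁻¹' {y})).2 fun y _ => h y))
  exact mem_biUnion (mem_image_of_mem f hx) ⟨hx, rfl⟩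

end PropStar

theorem countable_of_lt_ord_aleph_one {a : Ordinal} (ha : a < (aleph 1).ord) :
    Countable {b : Ordinal // b < a} := by
  have hcard : a.card ≤ ℵ₀ := lt_aleph_one_iff.1 (lt_ord.1 ha)
  rw [← mk_le_aleph0_iff, show #{b : Ordinal // b < a} = _ from Cardinal.mk_Iio_ordinal a,
    lift_le_aleph0]
  exact hcard

section LexPow

variable {L : Type} [LinearOrder L]

def lexRestrict {a b : Ordinal} (hba : b ≤ a) (x : Lex ({c : Ordinal // c < a} → L)) :
    Lex ({c : Ordinal // c < b} → L) :=
  toLex fun c => ofLex x ⟨c.1, c.2.trans_le hba⟩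

theorem lexRestrict_lt_lexRestrict {a b : Ordinal} (hba : b ≤ a)
    {x y : Lex ({c : Ordinal // c < a} → L)} {δ : {c : Ordinal // c < a}} (hδ : δ.1 < b)
    (hagree : ∀ γ : {c : Ordinal // c < a}, γ < δ → x γ = y γ) (hlt : x δ < y δ) :
    lexRestrict hba x < lexRestrict hba y :=
  ⟨⟨δ.1, hδ⟩, fun _ hγ => hagree _ hγ, hlt⟩

theorem monotone_lexRestrict {a b : Ordinal} (hba : b ≤ a) :
    Monotone (lexRestrict (L := L) hba) := by
  intro x y hxy
  obtain ⟨δ, hagree, hlt⟩ | rfl := hxy.lt_or_eq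
  · obtain hδ | hδ := lt_or_ge δ.1 b
    · exact (lexRestrict_lt_lexRestrict hba hδ hagree hlt).le
    · exact (congrArg toLex (funext fun γ => hagree _ (γ.2.trans_le hδ))).le
  · exact le_rfl

theorem strictMonoOn_apply_last_of_lexRestrict_eq {c : Ordinal}
    (s : Lex ({b : Ordinal // b < c} → L)) :
    StrictMonoOn (fun x : Lex ({b : Ordinal // b < succ c} → L) => x ⟨c, lt_succ c⟩)
      (lexRestrict (le_succ c) ⁻¹' {s}) := by
  rintro x hx y hy ⟨δ, hagree, hlt⟩
  obtain hδ | hδ := (lt_succ_iff.1 δ.2).lt_or_eq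
  · have := congrFun (congrArg ofLex (hx.trans hy.symm)) ⟨δ.1, hδ⟩
    exact absurd this hlt.ne
  · obtain rfl : δ = ⟨c, lt_succ c⟩ := Subtype.ext hδ
    exact hlt

theorem exists_uncountable_strictMonoOn_of_succ (hL : PropStarRel L (· < ·)) {c : Ordinal}
    {A : Set (Lex ({b : Ordinal // b < succ c} → L))} (hA : ¬A.Countable)
    (hres : (lexRestrict (le_succ c) '' A).Countable) :
    ∃ B ⊆ A, ¬B.Countable ∧ ∃ g : _ → ℝ, StrictMonoOn g B := by
  obtain ⟨s, hs⟩ := exists_not_countable_inter_preimage_singleton hA hres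
  have hlast := (strictMonoOn_apply_last_of_lexRestrict_eq s).mono (inter_subset_right (s := A))
  obtain ⟨B, hBA, hB, g, hg⟩ := exists_uncountable_strictMonoOn_of_monotoneOn hL
    hlast.monotoneOn fun h => hs (countable_of_injective_of_countable_image hlast.injOn h)
  exact ⟨B, hBA.trans inter_subset_left, hB, g, hg⟩

theorem exists_strictMonoOn_of_isSuccPrelimit {a : Ordinal} (hlim : IsSuccPrelimit a)
    (ha : a < (aleph 1).ord) {A : Set (Lex ({b : Ordinal // b < a} → L))}
    (hres : ∀ b (hb : b < a), (lexRestrict hb.le '' A).Countable) :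
    ∃ g : _ → ℝ, StrictMonoOn g A := by
  have := countable_of_lt_ord_aleph_one ha
  have (b : {b : Ordinal // b < a}) : Countable (lexRestrict (L := L) b.2.le '' A) :=
    (hres b.1 b.2).to_subtype
  refine exists_strictMonoOn_of_countable_separating
    (D := fun i : Σ b : {b : Ordinal // b < a}, lexRestrict (L := L) b.2.le '' A =>
      {x | lexRestrict i.1.2.le x ≤ i.2})
    (fun i x y hyx hx => (monotone_lexRestrict _ hyx).trans hx) ?_
  rintro x hx y - ⟨δ, hagree, hlt⟩
  have hδ : succ δ.1 < a := hlim.succ_lt δ.2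
  refine ⟨⟨⟨succ δ.1, hδ⟩, _, mem_image_of_mem _ hx⟩, ?_, ?_⟩
  · exact le_refl (lexRestrict hδ.le x)
  · exact not_le.2 (lexRestrict_lt_lexRestrict _ (lt_succ δ.1) hagree hlt)

end LexPow

theorem stmt_16 (L : Type) [LinearOrder L] (h : PropStarRel L (· < ·))
    (a : Ordinal) (ha : a < (Cardinal.aleph 1).ord) :
    PropStarRel ({b : Ordinal // b < a} → L) (LexPowRel L a) := by
  change PropStarRel (Lex ({b : Ordinal // b < a} → L)) (· < ·)
  induction a using WellFoundedLT.induction with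
  | _ a IH =>
  refine propStarRel_of_forall_exists_strictMonoOn fun A hA => ?_
  by_cases hres : ∃ b, ∃ hb : b < a, ¬(lexRestrict hb.le '' A).Countable
  · obtain ⟨b, hb, hbA⟩ := hres
    exact exists_uncountable_strictMonoOn_of_monotoneOn (IH b hb (hb.trans ha))
      ((monotone_lexRestrict hb.le).monotoneOn A) hbA
  push Not at hres
  obtain ⟨c, rfl⟩ | hlim := mem_range_succ_or_isSuccPrelimit a
  · exact exists_uncountable_strictMonoOn_of_succ h hA (hres c (lt_succ c))
  · exact ⟨A, subset_rfl, hA, exists_strictMonoOn_of_isSuccPrelimit hlim ha hres⟩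
end
end

section
/- For every decreasing transfinite sequence (f_β)_{β<α} (α a countable ordinal) of nonnegative bounded upper semicontinuous functions on a Polish space X, the generalized alternating sum Σ*_{β<α} (−1)^β f_β is a Baire class 1 function. -/
open Ordinal Set

noncomputable section

/-!
For every `ε > 0`, `S a` is uniformly `ε`-close to a function that is constant on each member of
a countable closed cover of `X`. Averaging these constant values with summable positive weights
against the indicators of the members (indicators of closed sets are limits of continuous
functions) gives a Baire class 1 function `ε`-close to `S a`, and uniform limits of Baire class 1
functions are Baire class 1.

The approximation property is proved along the recursion. It passes to sums and differences, and
an upper semicontinuous `f` has it via the locally closed, hence `Fσ`, sets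
`{kε ≤ f < (k+1)ε}`. At a limit stage `b` the even partial sums increase while `S c + f c`
decreases, so `0 ≤ S b - S e ≤ f e - inf_{c<b} f c` for even `e < b`. On the locally closed set
where `f e < (k+1)δ` and `kδ ≤ inf_{c<b} f c`, the sum `S b` is therefore `δ`-close to `S e`, and
since `b` is countable, countably many such sets cover `X`.
-/

open Filter Topology

theorem ordEven_iff {b : Ordinal} : OrdEven b ↔ ∃ q, b = 2 * q := by
  refine ⟨fun h => ⟨b / 2, ?_⟩, ?_⟩
  · simpa [show b % 2 = 0 from h] using (Ordinal.div_add_mod b 2).symm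
  · rintro ⟨q, rfl⟩
    simp [OrdEven]

theorem not_ordEven_iff {b : Ordinal} : ¬ OrdEven b ↔ ∃ q, b = 2 * q + 1 := by
  refine ⟨fun h => ⟨b / 2, ?_⟩, ?_⟩
  · have hb : b % 2 ≤ 1 := Order.lt_add_one_iff.mp <| by
      rw [one_add_one_eq_two]; exact Ordinal.mod_lt b two_ne_zero
    have h1 : b % 2 = 1 := (Order.le_one_iff.mp hb).resolve_left h
    simpa [h1] using (Ordinal.div_add_mod b 2).symm
  · rintro ⟨q, rfl⟩
    rw [OrdEven, Ordinal.mul_add_mod_self, Ordinal.mod_eq_of_lt one_lt_two]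
    exact one_ne_zero

theorem OrdEven.not_add_one {b : Ordinal} (h : OrdEven b) : ¬ OrdEven (b + 1) := by
  obtain ⟨q, rfl⟩ := ordEven_iff.mp h
  exact not_ordEven_iff.mpr ⟨q, rfl⟩

theorem ordEven_add_one_of_not {b : Ordinal} (h : ¬ OrdEven b) : OrdEven (b + 1) := by
  obtain ⟨q, rfl⟩ := not_ordEven_iff.mp h
  exact ordEven_iff.mpr ⟨q + 1, by rw [mul_add, mul_one, add_assoc, one_add_one_eq_two]⟩

theorem exists_ordEven_mem_Ico_of_isSuccLimit {b c : Ordinal} (hb : Order.IsSuccLimit b)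
    (hc : c < b) : ∃ e, OrdEven e ∧ c ≤ e ∧ e < b := by
  by_cases h : OrdEven c
  · exact ⟨c, h, le_rfl, hc⟩
  · exact ⟨c + 1, ordEven_add_one_of_not h, le_self_add, hb.succ_lt hc⟩

structure IsAltSum {X : Type*} (a : Ordinal) (f S : Ordinal → X → ℝ) : Prop where
  zero : S 0 = fun _ => 0
  succ_of_even : ∀ b : Ordinal, b + 1 ≤ a → OrdEven b → S (b + 1) = fun x => S b x + f b x
  succ_of_not_even : ∀ b : Ordinal, b + 1 ≤ a → ¬ OrdEven b →
    S (b + 1) = fun x => S b x - f b x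
  limit : ∀ b : Ordinal, b ≤ a → Order.IsSuccLimit b →
    ∀ x, S b x = sSup {y : ℝ | ∃ c, c < b ∧ OrdEven c ∧ y = S c x}

namespace IsAltSum

variable {X : Type*} {a : Ordinal} {f S : Ordinal → X → ℝ}

theorem sandwich_of_isSuccLimit (hS : IsAltSum a f S) {b e : Ordinal} (hb : b ≤ a)
    (hlim : Order.IsSuccLimit b) (he : OrdEven e) (heb : e < b) (x : X) {m : ℝ}
    (hm : ∀ c < b, m ≤ f c x)
    (hsand : ∀ c < b, ∀ d ≤ c, OrdEven c → OrdEven d →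
      S d x ≤ S c x ∧ S c x ≤ S d x + f d x - f c x) :
    S e x ≤ S b x ∧ S b x ≤ S e x + f e x - m := by
  have hub : ∀ c < b, OrdEven c → S c x ≤ S e x + f e x - m := by
    intro c hcb hc
    rcases le_total e c with hec | hce
    · linarith [(hsand c hcb e hec hc he).2, hm c hcb]
    · linarith [(hsand e heb c hce he hc).1, hm e heb]
  rw [hS.limit b hb hlim x]
  constructor
  · exact le_csSup ⟨_, by rintro _ ⟨c, hcb, hc, rfl⟩; exact hub c hcb hc⟩ ⟨e, heb, he, rfl⟩
  · exact csSup_le ⟨_, e, heb, he, rfl⟩ (by rintro _ ⟨c, hcb, hc, rfl⟩; exact hub c hcb hc)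

theorem sandwich (hS : IsAltSum a f S) (hdec : ∀ b c, b ≤ c → c < a → ∀ x, f c x ≤ f b x)
    {c : Ordinal} (hca : c < a) (hc : OrdEven c) {b : Ordinal} (hbc : b ≤ c) (hb : OrdEven b)
    (x : X) : S b x ≤ S c x ∧ S c x ≤ S b x + f b x - f c x := by
  induction c using WellFoundedLT.induction generalizing b with
  | ind c ih =>
  rcases hbc.eq_or_lt with rfl | hbc
  · simp
  rcases Ordinal.zero_or_succ_or_isSuccLimit c with rfl | ⟨d, rfl⟩ | hlim
  · simp at hbc
  · change OrdEven (d + 1) at hc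
    change b < d + 1 at hbc
    change d + 1 < a at hca
    change S b x ≤ S (d + 1) x ∧ S (d + 1) x ≤ S b x + f b x - f (d + 1) x
    obtain ⟨e, he, rfl⟩ : ∃ e, OrdEven e ∧ d = e + 1 := by
      obtain ⟨q, rfl⟩ := not_ordEven_iff.mp fun hd => hd.not_add_one hc
      exact ⟨2 * q, ordEven_iff.mpr ⟨q, rfl⟩, rfl⟩
    have hbe : b ≤ e := by
      rcases (Order.lt_succ_iff.mp hbc).eq_or_lt with rfl | hb'
      · exact absurd hb he.not_add_one
      · exact Order.lt_succ_iff.mp hb'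
    have hea : e < a := (le_self_add.trans le_self_add).trans_lt hca
    have hval : S (e + 1 + 1) x = S e x + f e x - f (e + 1) x := by
      rw [hS.succ_of_not_even _ hca.le he.not_add_one,
        hS.succ_of_even _ (le_self_add.trans hca.le) he]
    have ihe := ih e ((Order.lt_succ _).trans (Order.lt_succ _)) hea he hbe hb
    have h1 := hdec e (e + 1) le_self_add ((Order.lt_succ _).trans hca) x
    have h2 := hdec (e + 1) (e + 1 + 1) le_self_add hca x
    constructor <;> linarith
  · exact hS.sandwich_of_isSuccLimit hca.le hlim hb hbc x
      (fun d hd => hdec d c hd.le hca x)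
      (fun d hd b' hb'd hd' hb' => ih d hd (hd.trans hca) hd' hb'd hb')

end IsAltSum

def ClosedPiecewiseApprox {X : Type*} [TopologicalSpace X] (h : X → ℝ) (ε : ℝ) : Prop :=
  ∃ 𝒞 : Set (Set X), 𝒞.Countable ∧ (∀ C ∈ 𝒞, IsClosed C) ∧ (∀ x, ∃ C ∈ 𝒞, x ∈ C) ∧
    ∀ C ∈ 𝒞, ∃ c, ∀ x ∈ C, |h x - c| ≤ ε

namespace ClosedPiecewiseApprox

variable {X : Type*} [TopologicalSpace X] {h g : X → ℝ} {ε δ : ℝ}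

theorem const (r : ℝ) (hε : 0 ≤ ε) : ClosedPiecewiseApprox (fun _ : X => r) ε :=
  ⟨{Set.univ}, countable_singleton _, by simp, fun x => ⟨Set.univ, rfl, mem_univ x⟩,
    fun _ _ => ⟨r, fun _ _ => by simpa using hε⟩⟩

theorem add (hh : ClosedPiecewiseApprox h ε) (hg : ClosedPiecewiseApprox g δ) :
    ClosedPiecewiseApprox (fun x => h x + g x) (ε + δ) := by
  obtain ⟨𝒞, h𝒞, hC, hCcov, hc⟩ := hh
  obtain ⟨𝒟, h𝒟, hD, hDcov, hd⟩ := hg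
  refine ⟨image2 (· ∩ ·) 𝒞 𝒟, h𝒞.image2 h𝒟 _, ?_, fun x => ?_, ?_⟩
  · rintro _ ⟨C, hC𝒞, D, hD𝒟, rfl⟩
    exact (hC C hC𝒞).inter (hD D hD𝒟)
  · obtain ⟨C, hC𝒞, hxC⟩ := hCcov x
    obtain ⟨D, hD𝒟, hxD⟩ := hDcov x
    exact ⟨C ∩ D, mem_image2_of_mem hC𝒞 hD𝒟, hxC, hxD⟩
  · rintro _ ⟨C, hC𝒞, D, hD𝒟, rfl⟩
    obtain ⟨c, hc⟩ := hc C hC𝒞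
    obtain ⟨d, hd⟩ := hd D hD𝒟
    refine ⟨c + d, fun x ⟨hxC, hxD⟩ => ?_⟩
    calc |h x + g x - (c + d)| = |(h x - c) + (g x - d)| := by ring_nf
      _ ≤ |h x - c| + |g x - d| := abs_add_le _ _
      _ ≤ ε + δ := add_le_add (hc x hxC) (hd x hxD)

theorem neg (hh : ClosedPiecewiseApprox h ε) : ClosedPiecewiseApprox (fun x => -h x) ε := by
  obtain ⟨𝒞, h𝒞, hC, hCcov, hc⟩ := hh
  refine ⟨𝒞, h𝒞, hC, hCcov, fun C hC𝒞 => ?_⟩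
  obtain ⟨c, hc⟩ := hc C hC𝒞
  refine ⟨-c, fun x hx => ?_⟩
  rw [show -h x - -c = -(h x - c) by ring, abs_neg]
  exact hc x hx

theorem sub (hh : ClosedPiecewiseApprox h ε) (hg : ClosedPiecewiseApprox g δ) :
    ClosedPiecewiseApprox (fun x => h x - g x) (ε + δ) := by
  simpa only [sub_eq_add_neg] using hh.add hg.neg

end ClosedPiecewiseApprox

theorem IsLocallyClosed.exists_iUnion_isClosed {X : Type*} [PseudoEMetricSpace X]
    {A : Set X} (hA : IsLocallyClosed A) :
    ∃ F : ℕ → Set X, (∀ n, IsClosed (F n)) ∧ ⋃ n, F n = A := by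
  obtain ⟨U, Z, hU, hZ, rfl⟩ := hA
  obtain ⟨F, hF, -, hFU, -⟩ := hU.exists_iUnion_isClosed
  exact ⟨fun n => F n ∩ Z, fun n => (hF n).inter hZ, by rw [← iUnion_inter, hFU]⟩

theorem ClosedPiecewiseApprox.of_isLocallyClosed_cover {X : Type*} [PseudoEMetricSpace X]
    {h : X → ℝ} {ε δ : ℝ} {κ : Type*} [Countable κ] {A : κ → Set X}
    (hA : ∀ k, IsLocallyClosed (A k)) (hAcov : ∀ x, ∃ k, x ∈ A k) {g : κ → X → ℝ}
    (hg : ∀ k, ClosedPiecewiseApprox (g k) δ) (hhg : ∀ k, ∀ x ∈ A k, |h x - g k x| ≤ ε) :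
    ClosedPiecewiseApprox h (ε + δ) := by
  choose F hF hFA using fun k => (hA k).exists_iUnion_isClosed
  choose 𝒞 h𝒞 hC hCcov hc using hg
  refine ⟨⋃ k, ⋃ n, (F k n ∩ ·) '' 𝒞 k,
    countable_iUnion fun k => countable_iUnion fun n => (h𝒞 k).image _, ?_, fun x => ?_, ?_⟩
  · simp only [mem_iUnion, mem_image]
    rintro _ ⟨k, n, C, hC𝒞, rfl⟩
    exact (hF k n).inter (hC k C hC𝒞)
  · obtain ⟨k, hk⟩ := hAcov x
    obtain ⟨n, hn⟩ := mem_iUnion.mp (hFA k ▸ hk)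
    obtain ⟨C, hC𝒞, hxC⟩ := hCcov k x
    exact ⟨F k n ∩ C, mem_iUnion_of_mem k (mem_iUnion_of_mem n (mem_image_of_mem _ hC𝒞)),
      hn, hxC⟩
  · simp only [mem_iUnion, mem_image]
    rintro _ ⟨k, n, C, hC𝒞, rfl⟩
    obtain ⟨c, hc⟩ := hc k C hC𝒞
    refine ⟨c, fun x ⟨hxF, hxC⟩ => ?_⟩
    have hxA : x ∈ A k := hFA k ▸ mem_iUnion_of_mem n hxF
    calc |h x - c| = |(h x - g k x) + (g k x - c)| := by ring_nf
      _ ≤ |h x - g k x| + |g k x - c| := abs_add_le _ _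
      _ ≤ ε + δ := add_le_add (hhg k x hxA) (hc x hxC)

theorem USC.isClosed_setOf_le {X : Type} [TopologicalSpace X] {f : X → ℝ} (hf : USC f) (r : ℝ) :
    IsClosed {x | r ≤ f x} := by
  convert (hf r).isClosed_compl using 1
  ext x
  simp

theorem exists_int_mul_le_lt {δ : ℝ} (hδ : 0 < δ) (m : ℝ) :
    ∃ k : ℤ, k * δ ≤ m ∧ m < (k + 1) * δ :=
  ⟨⌊m / δ⌋, (le_div_iff₀ hδ).mp (Int.floor_le _), (div_lt_iff₀ hδ).mp (Int.lt_floor_add_one _)⟩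

theorem USC.closedPiecewiseApprox {X : Type} [PseudoEMetricSpace X] {f : X → ℝ} (hf : USC f)
    {ε : ℝ} (hε : 0 < ε) : ClosedPiecewiseApprox f ε := by
  simpa using ClosedPiecewiseApprox.of_isLocallyClosed_cover (κ := ℤ) (δ := 0)
    (A := fun k => f ⁻¹' Iio ((k + 1) * ε) ∩ {x | k * ε ≤ f x})
    (fun k => ⟨_, _, hf _, hf.isClosed_setOf_le _, rfl⟩)
    (fun x => (exists_int_mul_le_lt hε (f x)).imp fun k hk => ⟨hk.2, hk.1⟩)
    (fun k => ClosedPiecewiseApprox.const (k * ε) le_rfl)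
    (fun k x ⟨hlt, hle⟩ => abs_le.mpr ⟨by linarith [show k * ε ≤ f x from hle],
      by linarith [show f x < (k + 1) * ε from hlt]⟩)

theorem countable_Iio_of_lt_aleph_one_ord {b : Ordinal} (hb : b < (Cardinal.aleph 1).ord) :
    (Iio b).Countable := by
  rw [← Cardinal.le_aleph0_iff_set_countable, Cardinal.mk_Iio_ordinal, Cardinal.lift_le_aleph0,
    ← Cardinal.lt_aleph_one_iff, ← Cardinal.lt_ord]
  exact hb

namespace IsAltSum

variable {X : Type} [PseudoEMetricSpace X] {a : Ordinal} {f S : Ordinal → X → ℝ}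

theorem closedPiecewiseApprox_of_isSuccLimit (hS : IsAltSum a f S)
    (husc : ∀ b, b < a → USC (f b)) (hnn : ∀ b, b < a → ∀ x, 0 ≤ f b x)
    (hdec : ∀ b c, b ≤ c → c < a → ∀ x, f c x ≤ f b x) {b : Ordinal} (hb : b ≤ a)
    (hlim : Order.IsSuccLimit b) (hbc : (Iio b).Countable) {δ : ℝ} (hδ : 0 < δ)
    (ih : ∀ e < b, ClosedPiecewiseApprox (S e) δ) : ClosedPiecewiseApprox (S b) (δ + δ) := by
  have : Countable {e // e < b ∧ OrdEven e} := (hbc.mono fun _ he => he.1).to_subtype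
  refine ClosedPiecewiseApprox.of_isLocallyClosed_cover (κ := {e // e < b ∧ OrdEven e} × ℤ)
    (A := fun p => {x | f p.1 x < (p.2 + 1) * δ} ∩ {x | ∀ c < b, p.2 * δ ≤ f c x})
    (fun p => ⟨_, _, husc _ (p.1.2.1.trans_le hb) _, ?_, rfl⟩) (fun x => ?_)
    (fun p => ih p.1 p.1.2.1) ?_
  · simp only [ofPred_forall]
    exact isClosed_iInter fun c => isClosed_iInter fun hc =>
      (husc c (hc.trans_le hb)).isClosed_setOf_le _
  · have : Nonempty (Iio b) := ⟨⟨0, hlim.bot_lt⟩⟩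
    have hbdd : BddBelow (range fun c : Iio b => f c x) :=
      ⟨0, by rintro _ ⟨c, rfl⟩; exact hnn c (c.2.trans_le hb) x⟩
    obtain ⟨k, hk, hk'⟩ := exists_int_mul_le_lt hδ (⨅ c : Iio b, f c x)
    obtain ⟨c, hc⟩ := exists_lt_of_ciInf_lt hk'
    obtain ⟨e, he, hce, heb⟩ := exists_ordEven_mem_Ico_of_isSuccLimit hlim c.2
    exact ⟨(⟨e, heb, he⟩, k), (hdec c e hce (heb.trans_le hb) x).trans_lt hc,
      fun c' hc' => hk.trans (ciInf_le hbdd ⟨c', hc'⟩)⟩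
  · rintro ⟨⟨e, heb, he⟩, k⟩ x ⟨hfe, hk⟩
    have hfe : f e x < (k + 1) * δ := hfe
    obtain ⟨hlo, hup⟩ := hS.sandwich_of_isSuccLimit hb hlim he heb x hk
      fun c hc d hdc hc' hd => hS.sandwich hdec (hc.trans_le hb) hc' hdc hd x
    exact abs_le.mpr ⟨by linarith, by linarith⟩

theorem closedPiecewiseApprox (hS : IsAltSum a f S) (ha : a < (Cardinal.aleph 1).ord)
    (husc : ∀ b, b < a → USC (f b)) (hnn : ∀ b, b < a → ∀ x, 0 ≤ f b x)
    (hdec : ∀ b c, b ≤ c → c < a → ∀ x, f c x ≤ f b x) {b : Ordinal} (hb : b ≤ a)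
    {ε : ℝ} (hε : 0 < ε) : ClosedPiecewiseApprox (S b) ε := by
  induction b using Ordinal.limitRecOn generalizing ε with
  | zero => rw [hS.zero]; exact .const 0 hε.le
  | add_one c ih =>
    have hca : c < a := (Order.lt_succ c).trans_le hb
    have hSc := ih hca.le (half_pos hε)
    have hfc := (husc c hca).closedPiecewiseApprox (half_pos hε)
    rw [← add_halves ε]
    by_cases hc : OrdEven c
    · rw [hS.succ_of_even c hb hc]
      exact hSc.add hfc
    · rw [hS.succ_of_not_even c hb hc]
      exact hSc.sub hfc
  | limit b hlim ih =>
    rw [← add_halves ε]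
    exact hS.closedPiecewiseApprox_of_isSuccLimit husc hnn hdec hb hlim
      (countable_Iio_of_lt_aleph_one_ord (hb.trans_lt ha)) (half_pos hε)
      fun e he => ih e he (he.le.trans hb) (half_pos hε)

end IsAltSum

namespace BaireClass1

variable {X : Type} [TopologicalSpace X] {u v : X → ℝ}

theorem add (hu : BaireClass1 u) (hv : BaireClass1 v) : BaireClass1 (fun x => u x + v x) := by
  obtain ⟨F, hFc, hF⟩ := hu
  obtain ⟨G, hGc, hG⟩ := hv
  exact ⟨fun n x => F n x + G n x, fun n => (hFc n).add (hGc n), fun x => (hF x).add (hG x)⟩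

theorem sub (hu : BaireClass1 u) (hv : BaireClass1 v) : BaireClass1 (fun x => u x - v x) := by
  obtain ⟨F, hFc, hF⟩ := hu
  obtain ⟨G, hGc, hG⟩ := hv
  exact ⟨fun n x => F n x - G n x, fun n => (hFc n).sub (hGc n), fun x => (hF x).sub (hG x)⟩

theorem div_of_pos (hu : BaireClass1 u) (hv : BaireClass1 v) (hpos : ∀ x, 0 < v x) :
    BaireClass1 (fun x => u x / v x) := by
  obtain ⟨F, hFc, hF⟩ := hu
  obtain ⟨G, hGc, hG⟩ := hv
  have hεpos : ∀ n : ℕ, (0 : ℝ) < 1 / (n + 1) := fun n => by positivity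
  refine ⟨fun n x => F n x / max (G n x) (1 / (n + 1)),
    fun n => (hFc n).div ((hGc n).max continuous_const)
      fun x => ((hεpos n).trans_le (le_max_right _ _)).ne', fun x => ?_⟩
  have hmax : Tendsto (fun n : ℕ => max (G n x) (1 / (n + 1))) atTop (𝓝 (v x)) := by
    simpa [max_eq_left (hpos x).le] using (hG x).max tendsto_one_div_add_atTop_nhds_zero_nat
  exact (hF x).div hmax (hpos x).ne'

theorem exists_bounded_approx (hu : BaireClass1 u) {M : ℝ} (hM : ∀ x, |u x| ≤ M) :
    ∃ F : ℕ → X → ℝ, (∀ n, Continuous (F n)) ∧ (∀ n x, |F n x| ≤ M) ∧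
      ∀ x, Tendsto (fun n => F n x) atTop (𝓝 (u x)) := by
  obtain ⟨F, hFc, hF⟩ := hu
  refine ⟨fun n x => max (-M) (min M (F n x)),
    fun n => continuous_const.max (continuous_const.min (hFc n)), fun n x => ?_, fun x => ?_⟩
  · have hM0 : 0 ≤ M := (abs_nonneg _).trans (hM x)
    exact abs_le.mpr ⟨le_max_left _ _, max_le (by linarith) (min_le_left _ _)⟩
  · obtain ⟨hlo, hhi⟩ := abs_le.mp (hM x)
    have hclip := (tendsto_const_nhds (x := -M)).max ((tendsto_const_nhds (x := M)).min (hF x))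
    rwa [min_eq_right hhi, max_eq_right hlo] at hclip

theorem tsum {ι : Type*} {ψ : ι → X → ℝ} {M : ι → ℝ} (hψ : ∀ i, BaireClass1 (ψ i))
    (hM : ∀ i x, |ψ i x| ≤ M i) (hMs : Summable M) : BaireClass1 (fun x => ∑' i, ψ i x) := by
  choose F hFc hFM hF using fun i => (hψ i).exists_bounded_approx (hM i)
  exact ⟨fun n x => ∑' i, F i n x, fun n => continuous_tsum (fun i => hFc i n) hMs (hFM · n),
    fun x => tendsto_tsum_of_dominated_convergence hMs (fun i => hF i x)
      (Eventually.of_forall fun n i => hFM i n x)⟩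

end BaireClass1

theorem baireClass1_of_forall_approx {X : Type} [TopologicalSpace X] {h : X → ℝ}
    (happ : ∀ ε > 0, ∃ u, BaireClass1 u ∧ ∀ x, |h x - u x| ≤ ε) : BaireClass1 h := by
  choose u hu huh using fun n : ℕ => happ ((1 / 2) ^ n) (by positivity)
  have hstep : ∀ n x, |u (n + 1) x - u n x| ≤ 2 * (1 / 2) ^ n := fun n x => by
    calc |u (n + 1) x - u n x| = |(h x - u n x) - (h x - u (n + 1) x)| := by ring_nf
      _ ≤ |h x - u n x| + |h x - u (n + 1) x| := abs_sub _ _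
      _ ≤ (1 / 2) ^ n + (1 / 2) ^ (n + 1) := add_le_add (huh n x) (huh (n + 1) x)
      _ ≤ 2 * (1 / 2) ^ n := by rw [pow_succ]; linarith [pow_pos (by norm_num : (0:ℝ) < 1 / 2) n]
  have hsum : Summable fun n : ℕ => 2 * (1 / 2 : ℝ) ^ n := summable_geometric_two.mul_left 2
  have htel : ∀ x, h x = u 0 x + ∑' n, (u (n + 1) x - u n x) := fun x => by
    have hgeom : Tendsto (fun n : ℕ => (1 / 2 : ℝ) ^ n) atTop (𝓝 0) :=
      tendsto_pow_atTop_nhds_zero_of_lt_one (by norm_num) (by norm_num)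
    have hlim : Tendsto (fun n => u n x) atTop (𝓝 (h x)) := by
      have hlo : Tendsto (fun n : ℕ => h x - (1 / 2 : ℝ) ^ n) atTop (𝓝 (h x)) := by
        simpa using hgeom.const_sub (h x)
      have hhi : Tendsto (fun n : ℕ => h x + (1 / 2 : ℝ) ^ n) atTop (𝓝 (h x)) := by
        simpa using hgeom.const_add (h x)
      refine tendsto_of_tendsto_of_tendsto_of_le_of_le hlo hhi (fun n => ?_) (fun n => ?_) <;>
      linarith [abs_le.mp (huh n x)]
    have hs : HasSum (fun n => u (n + 1) x - u n x) (h x - u 0 x) := by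
      refine (hasSum_iff_tendsto_nat_of_summable_norm (hsum.of_nonneg_of_le (fun _ => norm_nonneg _)
        fun n => hstep n x)).mpr ?_
      simpa only [Finset.sum_range_sub (fun n => u n x)] using hlim.sub_const (u 0 x)
    rw [hs.tsum_eq]
    ring
  rw [funext htel]
  exact (hu 0).add (BaireClass1.tsum (fun n => (hu (n + 1)).sub (hu n)) hstep hsum)

theorem IsClosed.baireClass1_indicator {X : Type} [PseudoEMetricSpace X] {C : Set X}
    (hC : IsClosed C) (r : ℝ) : BaireClass1 (C.indicator fun _ => r) := by
  have hδ : ∀ n : ℕ, (0 : ℝ) < 1 / (n + 1) := fun n => by positivity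
  refine ⟨fun n x => r * thickenedIndicator (hδ n) C x,
    fun n => continuous_const.mul (NNReal.continuous_coe.comp (thickenedIndicator _ C).continuous),
    fun x => ?_⟩
  have hlim := tendsto_pi_nhds.mp
    (thickenedIndicator_tendsto_indicator_closure hδ tendsto_one_div_add_atTop_nhds_zero_nat C) x
  rw [hC.closure_eq] at hlim
  have hval : C.indicator (fun _ => r) x = r * NNReal.toReal (C.indicator (fun _ => 1) x) := by
    by_cases hx : x ∈ C <;> simp [hx]
  rw [hval]
  exact ((NNReal.continuous_coe.tendsto _).comp hlim).const_mul r

theorem abs_sub_tsum_mul_div_tsum_le {ι : Type*} {t c : ι → ℝ} {y ε : ℝ} (ht : ∀ i, 0 ≤ t i)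
    (hts : Summable t) (hcts : Summable fun i => c i * t i) (hpos : 0 < ∑' i, t i)
    (hc : ∀ i, t i ≠ 0 → |y - c i| ≤ ε) : |y - (∑' i, c i * t i) / ∑' i, t i| ≤ ε := by
  have hterm : ∀ i, |(y - c i) * t i| ≤ ε * t i := fun i => by
    rcases eq_or_ne (t i) 0 with h0 | h0
    · simp [h0]
    · rw [abs_mul, abs_of_nonneg (ht i)]
      exact mul_le_mul_of_nonneg_right (hc i h0) (ht i)
  have hdiff : Summable fun i => (y - c i) * t i := by
    simpa only [sub_mul] using (hts.mul_left y).sub hcts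
  have hkey : y * ∑' i, t i - ∑' i, c i * t i = ∑' i, (y - c i) * t i := by
    rw [← tsum_mul_left, ← (hts.mul_left y).tsum_sub hcts]
    simp only [sub_mul]
  rw [show y - (∑' i, c i * t i) / ∑' i, t i = (y * ∑' i, t i - ∑' i, c i * t i) / ∑' i, t i by
    field_simp, abs_div, abs_of_pos hpos, div_le_iff₀ hpos, hkey, ← tsum_mul_left, abs_le]
  constructor
  · rw [← tsum_neg]
    exact (hts.mul_left ε).neg.tsum_le_tsum (fun i => neg_le_of_abs_le (hterm i)) hdiff
  · exact hdiff.tsum_le_tsum (fun i => le_of_abs_le (hterm i)) (hts.mul_left ε)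

theorem exists_pos_summable_abs_mul {ι : Type*} [Countable ι] (c : ι → ℝ) :
    ∃ w : ι → ℝ, (∀ i, 0 < w i) ∧ Summable w ∧ Summable fun i => |c i| * w i := by
  obtain ⟨ρ, hρpos, _, hρ, -⟩ := NNReal.exists_pos_sum_of_countable one_ne_zero ι
  have hρs : Summable fun i => (ρ i : ℝ) := NNReal.summable_coe.mpr hρ.summable
  have hden : ∀ i, 0 < 1 + |c i| := fun i => by positivity
  have hpos : ∀ i, (0 : ℝ) < ρ i / (1 + |c i|) := fun i => div_pos (hρpos i) (hden i)
  refine ⟨fun i => ρ i / (1 + |c i|), hpos, hρs.of_nonneg_of_le (fun i => (hpos i).le)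
      fun i => div_le_self (ρ i).2 (by linarith [abs_nonneg (c i)]),
    hρs.of_nonneg_of_le (fun i => by positivity) fun i => ?_⟩
  rw [mul_div, div_le_iff₀ (hden i)]
  nlinarith [(ρ i).2]

theorem ClosedPiecewiseApprox.exists_baireClass1_approx {X : Type} [PseudoEMetricSpace X]
    {h : X → ℝ} {ε : ℝ} (hh : ClosedPiecewiseApprox h ε) :
    ∃ u, BaireClass1 u ∧ ∀ x, |h x - u x| ≤ ε := by
  obtain ⟨𝒞, h𝒞, hC, hCcov, hc⟩ := hh
  choose! c hc using hc
  have := h𝒞.to_subtype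
  -- the weights depend on `c` because `h` may be unbounded
  obtain ⟨w, hw_pos, hw, hcw⟩ := exists_pos_summable_abs_mul fun C : 𝒞 => c C
  set t : X → 𝒞 → ℝ := fun x C => (C : Set X).indicator (fun _ => w C) x
  have ht_nonneg : ∀ x C, 0 ≤ t x C := fun x C => indicator_nonneg (fun _ _ => (hw_pos C).le) x
  have ht_le : ∀ x C, |t x C| ≤ w C ∧ |c C * t x C| ≤ |c C| * w C := fun x C => by
    by_cases hx : x ∈ (C : Set X) <;>
      simp [t, hx, abs_mul, abs_of_pos (hw_pos C), (hw_pos C).le, mul_nonneg]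
  have ht_sum : ∀ x, Summable (t x) ∧ Summable fun C : 𝒞 => c C * t x C := fun x =>
    ⟨hw.of_norm_bounded fun C => (ht_le x C).1, hcw.of_norm_bounded fun C => (ht_le x C).2⟩
  have hden_pos : ∀ x, 0 < ∑' C, t x C := fun x => by
    obtain ⟨C, hC𝒞, hxC⟩ := hCcov x
    calc 0 < w ⟨C, hC𝒞⟩ := hw_pos _
      _ = t x ⟨C, hC𝒞⟩ := by simp [t, hxC]
      _ ≤ ∑' C, t x C := (ht_sum x).1.le_tsum _ fun C _ => ht_nonneg x C
  refine ⟨fun x => (∑' C : 𝒞, c C * t x C) / ∑' C, t x C, ?_, fun x => ?_⟩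
  · have hB1 : ∀ C : 𝒞, BaireClass1 fun x => c C * t x C := fun C => by
      have heq : (fun x => c C * t x C) = (C : Set X).indicator fun _ => c C * w C :=
        funext fun x => (indicator_const_mul _ _ _ _).symm
      rw [heq]
      exact (hC C C.2).baireClass1_indicator _
    exact (BaireClass1.tsum hB1 (fun C x => (ht_le x C).2) hcw).div_of_pos
      (BaireClass1.tsum (fun C : 𝒞 => (hC C C.2).baireClass1_indicator (w C))
        (fun C x => (ht_le x C).1) hw) hden_pos
  · refine abs_sub_tsum_mul_div_tsum_le (ht_nonneg x) (ht_sum x).1 (ht_sum x).2 (hden_pos x)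
      fun C hC0 => hc C C.2 x ?_
    by_contra hx
    exact hC0 (indicator_of_notMem hx _)

theorem stmt_19_general (X : Type) [TopologicalSpace X] [PolishSpace X]
    (a : Ordinal) (ha : a < (Cardinal.aleph 1).ord)
    (f : Ordinal → X → ℝ)
    (husc : ∀ b, b < a → USC (f b))
    (hnn : ∀ b, b < a → ∀ x, 0 ≤ f b x)
    (hdec : ∀ b c, b ≤ c → c < a → ∀ x, f c x ≤ f b x)
    (S : Ordinal → X → ℝ)
    (hS0 : S 0 = fun _ => 0)
    (hSsuccEven : ∀ b : Ordinal, b + 1 ≤ a → OrdEven b →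
      S (b + 1) = fun x => S b x + f b x)
    (hSsuccOdd : ∀ b : Ordinal, b + 1 ≤ a → ¬ OrdEven b →
      S (b + 1) = fun x => S b x - f b x)
    (hSlim : ∀ b : Ordinal, b ≤ a → Order.IsSuccLimit b →
      ∀ x, S b x = sSup {y : ℝ | ∃ c, c < b ∧ OrdEven c ∧ y = S c x}) :
    BaireClass1 (S a) := by
  let _ : MetricSpace X := TopologicalSpace.metrizableSpaceMetric X
  have hS : IsAltSum a f S := ⟨hS0, hSsuccEven, hSsuccOdd, hSlim⟩
  exact baireClass1_of_forall_approx fun ε hε =>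
    (hS.closedPiecewiseApprox ha husc hnn hdec le_rfl hε).exists_baireClass1_approx

theorem stmt_19 (X : Type) [TopologicalSpace X] [PolishSpace X]
    (a : Ordinal) (ha : a < (Cardinal.aleph 1).ord)
    (f : Ordinal → X → ℝ)
    (husc : ∀ b, b < a → USC (f b))
    (hnn : ∀ b, b < a → ∀ x, 0 ≤ f b x)
    (hbd : ∀ b, b < a → ∃ M, ∀ x, |f b x| ≤ M)
    (hdec : ∀ b c, b ≤ c → c < a → ∀ x, f c x ≤ f b x)
    (S : Ordinal → X → ℝ)
    (hS0 : S 0 = fun _ => 0)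
    (hSsuccEven : ∀ b : Ordinal, b + 1 ≤ a → OrdEven b →
      S (b + 1) = fun x => S b x + f b x)
    (hSsuccOdd : ∀ b : Ordinal, b + 1 ≤ a → ¬ OrdEven b →
      S (b + 1) = fun x => S b x - f b x)
    (hSlim : ∀ b : Ordinal, b ≤ a → Order.IsSuccLimit b →
      ∀ x, S b x = sSup {y : ℝ | ∃ c, c < b ∧ OrdEven c ∧ y = S c x}) :
    BaireClass1 (S a) :=
  stmt_19_general X a ha f husc hnn hdec S hS0 hSsuccEven hSsuccOdd hSlim
end
end
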